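/- arXiv:1111.6007 — 8 statements merged into one kernel-verified Lean document; each statement's English description precedes it below -/
import Mathlib

section
/- Let r ≥ 3 be an integer and let P^r = { (d₃(G), d₄(G)) : G a nonempty finite simple r-regular graph } ⊂ ℝ². Then the closure of P^r in ℝ² is a convex set. -/
open SimpleGraph

noncomputable def cycleCount {V : Type*} (G : SimpleGraph V) (k : ℕ) : ℕ :=
  Nat.card ((x : V) × {p : G.Walk x x // p.IsCycle ∧ p.length = k}) / (2 * k)

noncomputable def cycleDensity {V : Type*} (G : SimpleGraph V) (k : ℕ) : ℝ :=
  (cycleCount G k : ℝ) / (Nat.card V : ℝ)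

def IsRegularGraph {V : Type*} (G : SimpleGraph V) (r : ℕ) : Prop :=
  ∀ v : V, Nat.card (G.neighborSet v) = r

/-!
Rooted `k`-cycles of `G` (`k ≥ 3`) correspond to copies of the cycle graph `C_k` in `G`, and the
dihedral group of order `2k` acts freely on these copies by automorphisms of `C_k`; hence the
division by `2k` in `cycleCount` is exact. Since `C_k` is connected, each of its copies in a
disjoint union lies in one part, so cycle counts add up over disjoint unions. Taking `m|W|` copies
of an `r`-regular `G` on `V` and `n|V|` copies of an `r`-regular `H` on `W` gives an `r`-regular
graph whose density pair is the convex combination of those of `G` and `H` with weights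
`m/(m+n)` and `n/(m+n)`. So the set of density pairs is closed under rational convex combinations,
and its closure is convex.
-/

namespace SimpleGraph

section Copy

variable {α β γ : Type*} {A : SimpleGraph α} {B : SimpleGraph β} {C : SimpleGraph γ}

instance [Finite α] [Finite β] : Finite (A.Copy B) :=
  Finite.of_injective _ DFunLike.coe_injective

theorem Copy.exists_comp_eq_of_range_subset (e : B ↪g C) (f : A.Copy C)
    (h : Set.range f ⊆ Set.range e) : ∃ g : A.Copy B, e.toCopy.comp g = f := by
  choose g hg using fun a => h ⟨a, rfl⟩
  refine ⟨⟨⟨g, fun {a b} hab => ?_⟩, fun a b hab => ?_⟩, Copy.ext fun a => hg a⟩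
  · rw [← e.map_adj_iff, hg, hg]
    exact f.toHom.map_adj hab
  · exact f.injective <| show f a = f b by rw [← hg a, ← hg b]; exact congrArg e hab

theorem Copy.nat_card_sum [Finite α] [Finite β] [Finite γ] (hA : A.Connected) :
    Nat.card (A.Copy (B ⊕g C)) = Nat.card (A.Copy B) + Nat.card (A.Copy C) := by
  have a₀ : α := hA.nonempty.some
  rw [← Nat.card_sum]
  refine (Nat.card_eq_of_bijective (Sum.elim (Embedding.sumInl.toCopy.comp ·)
    (Embedding.sumInr.toCopy.comp ·)) ⟨?_, fun f => ?_⟩).symm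
  · refine Function.Injective.sumElim ?_ ?_ fun f g h => ?_
    · exact fun f g h => Copy.ext fun a => Sum.inl_injective (DFunLike.congr_fun h a)
    · exact fun f g h => Copy.ext fun a => Sum.inr_injective (DFunLike.congr_fun h a)
    · simpa using DFunLike.congr_fun h a₀
  have hreach (a : α) : (B ⊕g C).Reachable (f a₀) (f a) := (hA.preconnected a₀ a).map f.toHom
  rcases h₀ : f a₀ with v | w
  · obtain ⟨g, rfl⟩ := Copy.exists_comp_eq_of_range_subset Embedding.sumInl f <| by
      rintro _ ⟨a, rfl⟩
      rcases ha : f a with v' | w'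
      · exact ⟨v', rfl⟩
      · exact absurd (h₀ ▸ ha ▸ hreach a) (not_reachable_sum_inl_inr v w')
    exact ⟨.inl g, rfl⟩
  · obtain ⟨g, rfl⟩ := Copy.exists_comp_eq_of_range_subset Embedding.sumInr f <| by
      rintro _ ⟨a, rfl⟩
      rcases ha : f a with v' | w'
      · exact absurd (h₀ ▸ ha ▸ hreach a).symm (not_reachable_sum_inl_inr v' w)
      · exact ⟨w', rfl⟩
    exact ⟨.inr g, rfl⟩

theorem Copy.nat_card_boxProd_bot (hA : A.Connected) :
    Nat.card (A.Copy (B □ (⊥ : SimpleGraph γ))) = Nat.card (A.Copy B) * Nat.card γ := by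
  have a₀ : α := hA.nonempty.some
  rw [← Nat.card_prod]
  refine (Nat.card_eq_of_bijective (fun p : A.Copy B × γ => (boxProdLeft B ⊥ p.2).toCopy.comp p.1)
    ⟨fun p q h => ?_, fun f => ?_⟩).symm
  · have h' (a : α) : (p.1 a, p.2) = (q.1 a, q.2) := DFunLike.congr_fun h a
    exact Prod.ext (Copy.ext fun a => (Prod.ext_iff.mp (h' a)).1) (Prod.ext_iff.mp (h' a₀)).2
  · obtain ⟨g, hg⟩ := Copy.exists_comp_eq_of_range_subset (boxProdLeft B ⊥ (f a₀).2) f <| by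
      rintro _ ⟨a, rfl⟩
      have := (reachable_boxProd.mp ((hA.preconnected a a₀).map f.toHom)).2
      exact ⟨(f a).1, Prod.ext rfl (reachable_bot.mp this).symm⟩
    exact ⟨(g, _), hg⟩

instance : MulAction (A ≃g A) (A.Copy B) where
  smul g f := f.comp g.symm.toCopy
  one_smul _ := rfl
  mul_smul _ _ _ := rfl

theorem Copy.nat_card_subgroup_dvd (S : Subgroup (A ≃g A)) :
    Nat.card S ∣ Nat.card (A.Copy B) := by
  have hfree (f : A.Copy B) : MulAction.stabilizer S f = ⊥ := by
    refine (Subgroup.eq_bot_iff_forall _).mpr fun g hg => Subtype.ext <| RelIso.ext fun a => ?_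
    have : f (g.1.symm a) = f a := DFunLike.congr_fun hg a
    simpa using (congrArg g.1 (f.injective this)).symm
  rw [Nat.card_congr (MulAction.selfEquivOrbitsQuotientProd hfree), Nat.card_prod]
  exact dvd_mul_left _ _

end Copy

section Dihedral

variable {β : Type*} {B : SimpleGraph β} {k : ℕ}

-- `sr i` acts as `x ↦ -(x + i)` rather than `x ↦ i - x`, which would not be multiplicative.
def circulantGraph.dihedralIso (s : Set (ZMod k)) :
    DihedralGroup k → (circulantGraph s ≃g circulantGraph s)
  | .r i => ⟨Equiv.addRight i, by simp⟩
  | .sr i => ⟨(Equiv.addRight i).trans (Equiv.neg _), by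
      intro u v
      simp only [Equiv.trans_apply, Equiv.coe_addRight, Equiv.neg_apply, circulantGraph_adj,
        neg_sub_neg, add_sub_add_right_eq_sub, neg_inj, add_left_inj]
      exact and_congr_right fun _ => or_comm⟩

def circulantGraph.dihedralAut (s : Set (ZMod k)) :
    DihedralGroup k →* (circulantGraph s ≃g circulantGraph s) where
  toFun := dihedralIso s
  map_one' := RelIso.ext fun x => add_zero x
  map_mul' := by
    rintro (i | i) (j | j) <;> refine RelIso.ext fun x => ?_ <;>
      simp only [dihedralIso, DihedralGroup.r_mul_r, DihedralGroup.r_mul_sr, DihedralGroup.sr_mul_r,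
        DihedralGroup.sr_mul_sr, RelIso.mul_apply, RelIso.coe_fn_mk, Equiv.trans_apply,
        Equiv.coe_addRight, Equiv.neg_apply] <;> ring

theorem circulantGraph.dihedralAut_injective (hk : 3 ≤ k) (s : Set (ZMod k)) :
    Function.Injective (dihedralAut s) := by
  refine (injective_iff_map_eq_one _).mpr ?_
  rintro (i | i) h
  · have hi : 0 + i = 0 := RelIso.ext_iff.mp h 0
    rw [zero_add] at hi
    rw [hi, DihedralGroup.r_zero]
  · have h0 : -(0 + i) = 0 := RelIso.ext_iff.mp h 0
    have h1 : -(1 + i) = 1 := RelIso.ext_iff.mp h 1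
    have h2 : ((2 : ℕ) : ZMod k) = 0 := by
      push_cast
      linear_combination h0 - h1
    exact absurd (Nat.le_of_dvd two_pos ((ZMod.natCast_eq_zero_iff 2 k).mp h2)) (by omega)

theorem two_mul_dvd_nat_card_copy_circulantGraph (hk : 3 ≤ k) (s : Set (ZMod k)) :
    2 * k ∣ Nat.card ((circulantGraph s).Copy B) := by
  rw [← DihedralGroup.nat_card, Nat.card_congr
    (MonoidHom.ofInjective (circulantGraph.dihedralAut_injective hk s)).toEquiv]
  exact Copy.nat_card_subgroup_dvd _

theorem two_mul_dvd_nat_card_copy_cycleGraph (hk : 3 ≤ k) :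
    2 * k ∣ Nat.card ((cycleGraph k).Copy B) := by
  obtain ⟨n, rfl⟩ := Nat.exists_eq_add_of_le' hk
  rw [cycleGraph_eq_circulantGraph]
  exact two_mul_dvd_nat_card_copy_circulantGraph hk {1}

end Dihedral

theorem cycleGraph_connected_of_pos {k : ℕ} (hk : 0 < k) : (cycleGraph k).Connected := by
  obtain ⟨n, rfl⟩ : ∃ n, k = n + 1 := ⟨k - 1, by omega⟩
  exact cycleGraph_connected

section RootedCycle

variable {V : Type*} {G : SimpleGraph V} {n : ℕ}

abbrev RootedCycle (G : SimpleGraph V) (k : ℕ) : Type _ :=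
  (x : V) × {p : G.Walk x x // p.IsCycle ∧ p.length = k}

theorem cycleGraph.mem_support_cycle (v : Fin (n + 3)) : v ∈ (cycleGraph.cycle n).support := by
  refine Walk.mem_support_iff_exists_getVert.mpr ⟨n + 3 - v, ?_, by simp⟩
  rw [cycleGraph.getVert_cycle (by omega)]
  ext
  simp [Nat.sub_sub_self v.is_lt.le, Nat.mod_eq_of_lt v.is_lt]

def Copy.toRootedCycle (f : (cycleGraph (n + 3)).Copy G) : G.RootedCycle (n + 3) :=
  ⟨f 0, (cycleGraph.cycle n).map f.toHom,
    (Walk.isCycle_map_iff_of_injective f.injective).mpr cycleGraph.isCycle_cycle, by simp⟩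

theorem Copy.toRootedCycle_injective :
    Function.Injective (Copy.toRootedCycle : (cycleGraph (n + 3)).Copy G → _) := by
  intro f g h
  have hsupp := congrArg (fun c : G.RootedCycle (n + 3) => c.2.1.support) h
  simp only [Copy.toRootedCycle, Walk.support_map, List.map_inj_left] at hsupp
  exact Copy.ext fun v => hsupp v (cycleGraph.mem_support_cycle v)

theorem Walk.adj_getVert_of_sub_eq_one {x : V} (p : G.Walk x x) (hp : p.length = n + 3)
    {u v : Fin (n + 3)} (huv : v - u = 1) : G.Adj (p.getVert u) (p.getVert v) := by
  rw [sub_eq_iff_eq_add'] at huv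
  subst huv
  have hsucc := p.adj_getVert_succ (i := u) (by omega)
  rw [Fin.val_add_one]
  split_ifs with hu
  · have hlast : (u : ℕ) + 1 = p.length := by simp [hp, hu]
    rw [hlast, Walk.getVert_length] at hsucc
    simpa using hsucc
  · exact hsucc

def RootedCycle.toCopy (c : G.RootedCycle (n + 3)) : (cycleGraph (n + 3)).Copy G :=
  ⟨⟨fun i => c.2.1.getVert i, fun {u v} huv => by
    rcases huv with huv | huv
    · exact (Walk.adj_getVert_of_sub_eq_one _ c.2.2.2 huv).symm
    · exact Walk.adj_getVert_of_sub_eq_one _ c.2.2.2 huv⟩,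
    fun u v huv => Fin.ext <| c.2.2.1.getVert_injOn' (by simp [c.2.2.2]; omega)
      (by simp [c.2.2.2]; omega) huv⟩

theorem RootedCycle.toCopy_injective :
    Function.Injective (RootedCycle.toCopy : G.RootedCycle (n + 3) → _) := by
  rintro ⟨x, p, hp, hpl⟩ ⟨y, q, hq, hql⟩ h
  have hv (i : Fin (n + 3)) : p.getVert i = q.getVert i := DFunLike.congr_fun h i
  obtain rfl : x = y := by simpa using hv 0
  obtain rfl : p = q := Walk.ext_getVert_le_length (hpl.trans hql.symm) fun m hm => by
    rcases hm.lt_or_eq with hm | hm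
    · exact hv ⟨m, hpl ▸ hm⟩
    · rw [hm, Walk.getVert_length, hpl, ← hql, Walk.getVert_length]
  rfl

theorem nat_card_rootedCycle [Finite V] {k : ℕ} (hk : 3 ≤ k) :
    Nat.card (G.RootedCycle k) = Nat.card ((cycleGraph k).Copy G) := by
  obtain ⟨n, rfl⟩ := Nat.exists_eq_add_of_le' hk
  have := Finite.of_injective _ (RootedCycle.toCopy_injective (G := G) (n := n))
  exact (Nat.card_le_card_of_injective _ RootedCycle.toCopy_injective).antisymm
    (Nat.card_le_card_of_injective _ Copy.toRootedCycle_injective)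

end RootedCycle

end SimpleGraph

section CycleDensity

open SimpleGraph

variable {V W : Type*} {G : SimpleGraph V} {H : SimpleGraph W} {k : ℕ}

theorem two_mul_mul_cycleCount [Finite V] (hk : 3 ≤ k) :
    2 * k * cycleCount G k = Nat.card ((cycleGraph k).Copy G) := by
  rw [cycleCount, ← nat_card_rootedCycle (G := G) hk]
  exact Nat.mul_div_cancel' (nat_card_rootedCycle (G := G) hk ▸
    two_mul_dvd_nat_card_copy_cycleGraph hk)

theorem cycleCount_sum [Finite V] [Finite W] (hk : 3 ≤ k) :
    cycleCount (G ⊕g H) k = cycleCount G k + cycleCount H k := by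
  refine Nat.eq_of_mul_eq_mul_left (by omega : 0 < 2 * k) ?_
  rw [mul_add, two_mul_mul_cycleCount hk, two_mul_mul_cycleCount hk, two_mul_mul_cycleCount hk,
    Copy.nat_card_sum (cycleGraph_connected_of_pos (by omega))]

theorem cycleCount_boxProd_bot [Finite V] [Finite W] (hk : 3 ≤ k) :
    cycleCount (G □ (⊥ : SimpleGraph W)) k = cycleCount G k * Nat.card W := by
  refine Nat.eq_of_mul_eq_mul_left (by omega : 0 < 2 * k) ?_
  rw [← mul_assoc, two_mul_mul_cycleCount hk, two_mul_mul_cycleCount hk,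
    Copy.nat_card_boxProd_bot (cycleGraph_connected_of_pos (by omega))]

theorem cycleDensity_boxProd_bot [Finite V] [Finite W] [Nonempty W] (hk : 3 ≤ k) :
    cycleDensity (G □ (⊥ : SimpleGraph W)) k = cycleDensity G k := by
  rw [cycleDensity, cycleDensity, cycleCount_boxProd_bot hk, Nat.card_prod, Nat.cast_mul,
    Nat.cast_mul, mul_div_mul_right _ _ (Nat.cast_ne_zero.mpr Nat.card_pos.ne')]

theorem cycleDensity_sum [Finite V] [Finite W] [Nonempty V] [Nonempty W] (hk : 3 ≤ k) :
    cycleDensity (G ⊕g H) k = (Nat.card V * cycleDensity G k + Nat.card W * cycleDensity H k) /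
      (Nat.card V + Nat.card W) := by
  have hV : (Nat.card V : ℝ) ≠ 0 := Nat.cast_ne_zero.mpr Nat.card_pos.ne'
  have hW : (Nat.card W : ℝ) ≠ 0 := Nat.cast_ne_zero.mpr Nat.card_pos.ne'
  rw [cycleDensity, cycleDensity, cycleDensity, cycleCount_sum hk, Nat.card_sum,
    mul_div_cancel₀ _ hV, mul_div_cancel₀ _ hW]
  push_cast
  rfl

theorem IsRegularGraph.sum {r : ℕ} (hG : IsRegularGraph G r) (hH : IsRegularGraph H r) :
    IsRegularGraph (G ⊕g H) r := by
  rintro (v | w)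
  · rw [neighborSet_sum_inl, Nat.card_image_of_injective Sum.inl_injective, hG]
  · rw [neighborSet_sum_inr, Nat.card_image_of_injective Sum.inr_injective, hH]

theorem IsRegularGraph.boxProd_bot {r : ℕ} (hG : IsRegularGraph G r) :
    IsRegularGraph (G □ (⊥ : SimpleGraph W)) r := by
  rintro ⟨v, w⟩
  rw [neighborSet_boxProd, neighborSet_bot, Set.prod_empty, Set.union_empty, Set.prod_singleton,
    Nat.card_image_of_injective (Prod.mk_left_injective w), hG]

-- `m * |W|` copies of `G` beside `n * |V|` copies of `H`: the two parts have `m * |V| * |W|` and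
-- `n * |V| * |W|` vertices, so the cycle densities mix in the ratio `m : n`.
def SimpleGraph.mixture (G : SimpleGraph V) (H : SimpleGraph W) (m n : ℕ) :
    SimpleGraph ((V × (Fin m × W)) ⊕ (W × (Fin n × V))) :=
  (G □ ⊥) ⊕g (H □ ⊥)

theorem IsRegularGraph.mixture {r : ℕ} (hG : IsRegularGraph G r) (hH : IsRegularGraph H r)
    (m n : ℕ) : IsRegularGraph (G.mixture H m n) r :=
  hG.boxProd_bot.sum hH.boxProd_bot

theorem cycleDensity_mixture [Finite V] [Finite W] [Nonempty V] [Nonempty W] {m n : ℕ}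
    (hm : 0 < m) (hn : 0 < n) (hk : 3 ≤ k) :
    cycleDensity (G.mixture H m n) k =
      (m / (m + n) : ℝ) * cycleDensity G k + (n / (m + n) : ℝ) * cycleDensity H k := by
  have : NeZero m := ⟨hm.ne'⟩
  have : NeZero n := ⟨hn.ne'⟩
  have hV : (Nat.card V : ℝ) ≠ 0 := Nat.cast_ne_zero.mpr Nat.card_pos.ne'
  have hW : (Nat.card W : ℝ) ≠ 0 := Nat.cast_ne_zero.mpr Nat.card_pos.ne'
  rw [SimpleGraph.mixture, cycleDensity_sum hk, cycleDensity_boxProd_bot hk,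
    cycleDensity_boxProd_bot hk]
  simp only [Nat.card_prod, Nat.card_eq_fintype_card, Fintype.card_fin]
  push_cast
  field_simp

end CycleDensity

theorem Icc_subset_closure_nat_div_add :
    Set.Icc (0 : ℝ) 1 ⊆ closure {t | ∃ m n : ℕ, 0 < m ∧ 0 < n ∧ t = m / (m + n)} := by
  have hrat : Set.Ioo (0 : ℝ) 1 ∩ Set.range ((↑) : ℚ → ℝ) ⊆
      {t | ∃ m n : ℕ, 0 < m ∧ 0 < n ∧ t = m / (m + n)} := by
    rintro _ ⟨⟨hq0, hq1⟩, q, rfl⟩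
    have hnum : 0 < q.num := Rat.num_pos.mpr (by exact_mod_cast hq0)
    have hlt : q.num < q.den := by
      rw [Rat.cast_def, div_lt_one (by positivity)] at hq1
      exact_mod_cast hq1
    refine ⟨q.num.toNat, q.den - q.num.toNat, by omega, by omega, ?_⟩
    rw [Rat.cast_def, Nat.cast_sub (by omega), add_sub_cancel]
    congr 1
    exact_mod_cast (Int.toNat_of_nonneg hnum.le).symm
  calc Set.Icc (0 : ℝ) 1 = closure (Set.Ioo 0 1) := (closure_Ioo zero_ne_one).symm
    _ ⊆ closure (closure (Set.Ioo 0 1 ∩ Set.range ((↑) : ℚ → ℝ))) :=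
      closure_mono (Rat.denseRange_cast.open_subset_closure_inter isOpen_Ioo)
    _ ⊆ _ := by rw [closure_closure]; exact closure_mono hrat

theorem convex_closure_of_nat_div_add_smul_mem {E : Type*} [AddCommGroup E] [Module ℝ E]
    [TopologicalSpace E] [ContinuousAdd E] [ContinuousSMul ℝ E] {s : Set E}
    (hs : ∀ x ∈ s, ∀ y ∈ s, ∀ m n : ℕ, 0 < m → 0 < n →
      (m / (m + n) : ℝ) • x + (n / (m + n) : ℝ) • y ∈ s) :
    Convex ℝ (closure s) := by
  set Q := {t : ℝ | ∃ m n : ℕ, 0 < m ∧ 0 < n ∧ t = m / (m + n)}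
  let F : ℝ × E × E → E := fun p => p.1 • p.2.1 + (1 - p.1) • p.2.2
  have hF : Continuous F := by fun_prop
  have hFs : F '' Q ×ˢ s ×ˢ s ⊆ s := by
    rintro _ ⟨⟨_, x, y⟩, ⟨⟨m, n, hm, hn, rfl⟩, hx, hy⟩, rfl⟩
    have : (1 : ℝ) - m / (m + n) = n / (m + n) := by field_simp; ring
    simpa [F, this] using hs x hx y hy m n hm hn
  intro x hx y hy a b ha hb hab
  have hmem : (a, x, y) ∈ closure (Q ×ˢ s ×ˢ s) := by
    rw [closure_prod_eq, closure_prod_eq]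
    exact ⟨Icc_subset_closure_nat_div_add ⟨ha, by linarith⟩, hx, hy⟩
  have : a • x + b • y = F (a, x, y) := by simp [F, ← hab]
  rw [this]
  exact closure_mono hFs (image_closure_subset_closure_image hF ⟨_, hmem, rfl⟩)

theorem convex_closure_densityPairs_general (r : ℕ) :
    Convex ℝ (closure {p : ℝ × ℝ | ∃ (V : Type) (G : SimpleGraph V),
      Finite V ∧ Nonempty V ∧ IsRegularGraph G r ∧
      p = (cycleDensity G 3, cycleDensity G 4)}) := by
  refine convex_closure_of_nat_div_add_smul_mem ?_
  rintro _ ⟨V, G, _, _, hG, rfl⟩ _ ⟨W, H, _, _, hH, rfl⟩ m n hm hn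
  have : NeZero m := ⟨hm.ne'⟩
  refine ⟨_, G.mixture H m n, inferInstance, inferInstance, hG.mixture hH m n, ?_⟩
  simp [cycleDensity_mixture hm hn]

/-- The closure of the set `P^r` of pairs `(d₃(G), d₄(G))` over all nonempty finite simple
`r`-regular graphs `G` is a convex subset of `ℝ²`. -/
theorem convex_closure_densityPairs (r : ℕ) (hr : 3 ≤ r) :
    Convex ℝ (closure {p : ℝ × ℝ | ∃ (V : Type) (G : SimpleGraph V),
      Finite V ∧ Nonempty V ∧ IsRegularGraph G r ∧
      p = (cycleDensity G 3, cycleDensity G 4)}) :=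
  convex_closure_densityPairs_general r
end

section
/- Let r ≥ 3 be an integer, G a finite simple r-regular graph, and x a vertex of G. Then c₃(G,x) + c₄(G,x) ≤ (r−1)·C(r,2), i.e. the number of triangles containing x plus the number of 4-cycles containing x is at most r(r−1)²/2. -/
open SimpleGraph

/-- The number of `k`-cycles of `G` containing the vertex `x`: each such cycle subgraph
corresponds to exactly two closed walks at `x` that are cycles of length `k`. -/
noncomputable def cycleCountAt {V : Type*} (G : SimpleGraph V) (x : V) (k : ℕ) : ℕ :=
  Nat.card {p : G.Walk x x // p.IsCycle ∧ p.length = k} / 2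

section Aux

variable {V : Type*} {G : SimpleGraph V}

private lemma walk_eq_cons3 {u v : V} (p : G.Walk u v) (h : p.length = 3) :
    ∃ (a b : V) (h1 : G.Adj u a) (h2 : G.Adj a b) (h3 : G.Adj b v),
      p = Walk.cons h1 (Walk.cons h2 (Walk.cons h3 Walk.nil)) := by
  cases p with
  | nil => simp at h
  | cons h1 q =>
    cases q with
    | nil => simp at h
    | cons h2 q =>
      cases q with
      | nil => simp at h
      | cons h3 q =>
        cases q with
        | nil => exact ⟨_, _, h1, h2, h3, rfl⟩
        | cons h4 q => simp [SimpleGraph.Walk.length_cons] at h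

private lemma walk_eq_cons4 {u v : V} (p : G.Walk u v) (h : p.length = 4) :
    ∃ (a b c : V) (h1 : G.Adj u a) (h2 : G.Adj a b) (h3 : G.Adj b c) (h4 : G.Adj c v),
      p = Walk.cons h1 (Walk.cons h2 (Walk.cons h3 (Walk.cons h4 Walk.nil))) := by
  cases p with
  | nil => simp at h
  | cons h1 q =>
    cases q with
    | nil => simp at h
    | cons h2 q =>
      cases q with
      | nil => simp at h
      | cons h3 q =>
        cases q with
        | nil => simp at h
        | cons h4 q =>
          cases q with
          | nil => exact ⟨_, _, _, h1, h2, h3, h4, rfl⟩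
          | cons h5 q => simp [SimpleGraph.Walk.length_cons] at h

end Aux

/-- In a finite simple `r`-regular graph (`r ≥ 3`), the number of triangles through a vertex
plus the number of `4`-cycles through that vertex is at most `(r-1)·C(r,2) = r(r-1)²/2`. -/
theorem cycleCountAt_three_add_four_le {V : Type*} [Finite V]
    (r : ℕ) (hr : 3 ≤ r) (G : SimpleGraph V) (hG : IsRegularGraph G r) (x : V) :
    cycleCountAt G x 3 + cycleCountAt G x 4 ≤ (r - 1) * r.choose 2 := by
  classical
  cases nonempty_fintype V
  -- the degree of each vertex is `r`
  have hdeg : ∀ v : V, (G.neighborFinset v).card = r := by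
    intro v
    have h1 : Nat.card (G.neighborSet v) = r := hG v
    rwa [Nat.card_eq_fintype_card, G.card_neighborSet_eq_degree] at h1
  -- target finset: triples (a, c, w) with a,c distinct neighbors of x, w a neighbor of a, w ≠ x
  set F : Finset (V × V × V) := (G.neighborFinset x).biUnion (fun a =>
    {a} ×ˢ (((G.neighborFinset x).erase a) ×ˢ ((G.neighborFinset a).erase x))) with hFdef
  have hFcard : F.card ≤ r * ((r - 1) * (r - 1)) := by
    refine le_trans (Finset.card_biUnion_le) ?_
    have hsum : ∀ a ∈ G.neighborFinset x,
        ({a} ×ˢ (((G.neighborFinset x).erase a) ×ˢ ((G.neighborFinset a).erase x))).card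
          = (r - 1) * (r - 1) := by
      intro a ha
      have hax : G.Adj x a := by rwa [SimpleGraph.mem_neighborFinset] at ha
      have hxa : x ∈ G.neighborFinset a := by
        rw [SimpleGraph.mem_neighborFinset]; exact hax.symm
      rw [Finset.card_product, Finset.card_product, Finset.card_singleton, one_mul,
        Finset.card_erase_of_mem ha, Finset.card_erase_of_mem hxa, hdeg, hdeg]
    calc ∑ a ∈ G.neighborFinset x,
          ({a} ×ˢ (((G.neighborFinset x).erase a) ×ˢ ((G.neighborFinset a).erase x))).card
        = ∑ _a ∈ G.neighborFinset x, (r - 1) * (r - 1) := Finset.sum_congr rfl hsum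
      _ = r * ((r - 1) * (r - 1)) := by rw [Finset.sum_const, hdeg, smul_eq_mul]
      _ ≤ r * ((r - 1) * (r - 1)) := le_rfl
  -- membership lemmas
  have hmemF : ∀ a c w : V, G.Adj x a → G.Adj x c → c ≠ a → G.Adj a w → w ≠ x →
      (a, c, w) ∈ F := by
    intro a c w h1 h2 h3 h4 h5
    rw [hFdef]
    simp only [Finset.mem_biUnion, Finset.mem_product, Finset.mem_singleton, Finset.mem_erase,
      SimpleGraph.mem_neighborFinset]
    exact ⟨a, h1, rfl, ⟨h3, h2⟩, ⟨h5, h4⟩⟩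
  have hmem3 : ∀ (p : G.Walk x x), p.IsCycle → p.length = 3 →
      (p.getVert 1, p.getVert 2, p.getVert 2) ∈ F := by
    intro p hc hl
    obtain ⟨a, b, h1, h2, h3, rfl⟩ := walk_eq_cons3 p hl
    simp only [SimpleGraph.Walk.getVert_cons_succ, SimpleGraph.Walk.getVert_zero]
    exact hmemF a b b h1 (h3.symm) h2.ne' h2 h3.ne
  have hmem4 : ∀ (p : G.Walk x x), p.IsCycle → p.length = 4 →
      (p.getVert 1, p.getVert 3, p.getVert 2) ∈ F := by
    intro p hc hl
    obtain ⟨a, b, c, h1, h2, h3, h4, rfl⟩ := walk_eq_cons4 p hl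
    have hnodup := hc.support_nodup
    simp only [SimpleGraph.Walk.support_cons, SimpleGraph.Walk.support_nil, List.tail_cons,
      List.nodup_cons, List.mem_cons, List.mem_singleton, List.not_mem_nil] at hnodup
    have hac : c ≠ a := by
      intro hca; exact hnodup.1 (Or.inr (Or.inl hca.symm))
    have hbx : b ≠ x := by
      intro hbx; exact hnodup.2.1 (Or.inr (Or.inl hbx))
    simp only [SimpleGraph.Walk.getVert_cons_succ, SimpleGraph.Walk.getVert_zero]
    exact hmemF a c b h1 (h4.symm) hac h2 hbx
  -- the injection
  set S3 := {p : G.Walk x x // p.IsCycle ∧ p.length = 3} with hS3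
  set S4 := {p : G.Walk x x // p.IsCycle ∧ p.length = 4} with hS4
  let f : S3 ⊕ S4 → {q // q ∈ F} := Sum.elim
    (fun p => ⟨(p.1.getVert 1, p.1.getVert 2, p.1.getVert 2), hmem3 p.1 p.2.1 p.2.2⟩)
    (fun p => ⟨(p.1.getVert 1, p.1.getVert 3, p.1.getVert 2), hmem4 p.1 p.2.1 p.2.2⟩)
  have hinj : Function.Injective f := by
    rintro (⟨p, hp, hpl⟩ | ⟨p, hp, hpl⟩) (⟨q, hq, hql⟩ | ⟨q, hq, hql⟩) hfq <;>
      simp only [f, Sum.elim_inl, Sum.elim_inr, Subtype.mk.injEq, Prod.mk.injEq] at hfq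
    · obtain ⟨a, b, h1, h2, h3, rfl⟩ := walk_eq_cons3 p hpl
      obtain ⟨a', b', h1', h2', h3', rfl⟩ := walk_eq_cons3 q hql
      simp only [SimpleGraph.Walk.getVert_cons_succ, SimpleGraph.Walk.getVert_zero] at hfq
      obtain ⟨rfl, rfl, -⟩ := hfq
      rfl
    · -- inl vs inr: impossible since for inr the 2nd and 3rd coordinates differ
      exfalso
      obtain ⟨a', b', c', h1', h2', h3', h4', rfl⟩ := walk_eq_cons4 q hql
      simp only [SimpleGraph.Walk.getVert_cons_succ, SimpleGraph.Walk.getVert_zero] at hfq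
      exact h3'.ne (hfq.2.1.symm.trans hfq.2.2).symm
    · exfalso
      obtain ⟨a, b, c, h1, h2, h3, h4, rfl⟩ := walk_eq_cons4 p hpl
      simp only [SimpleGraph.Walk.getVert_cons_succ, SimpleGraph.Walk.getVert_zero] at hfq
      exact h3.ne (hfq.2.2.trans hfq.2.1.symm)
    · obtain ⟨a, b, c, h1, h2, h3, h4, rfl⟩ := walk_eq_cons4 p hpl
      obtain ⟨a', b', c', h1', h2', h3', h4', rfl⟩ := walk_eq_cons4 q hql
      simp only [SimpleGraph.Walk.getVert_cons_succ, SimpleGraph.Walk.getVert_zero] at hfq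
      obtain ⟨rfl, rfl, rfl⟩ := hfq
      rfl
  -- finiteness of the source
  have hfin3 : Finite S3 := by
    refine Finite.of_injective
      (fun p => (⟨p.1, p.2.2⟩ : {p : G.Walk x x // p.length = 3})) ?_
    intro a b h
    cases a; cases b; exact Subtype.ext (by simpa using h)
  have hfin4 : Finite S4 := by
    refine Finite.of_injective
      (fun p => (⟨p.1, p.2.2⟩ : {p : G.Walk x x // p.length = 4})) ?_
    intro a b h
    cases a; cases b; exact Subtype.ext (by simpa using h)
  have hcard : Nat.card S3 + Nat.card S4 ≤ r * ((r - 1) * (r - 1)) := by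
    rw [← Nat.card_sum]
    calc Nat.card (S3 ⊕ S4) ≤ Nat.card {q // q ∈ F} :=
          Nat.card_le_card_of_injective f hinj
      _ = F.card := Nat.card_eq_finsetCard F
      _ ≤ r * ((r - 1) * (r - 1)) := hFcard
  -- arithmetic
  have hchoose : 2 * r.choose 2 = r * (r - 1) := by
    rw [Nat.choose_two_right]
    exact Nat.mul_div_cancel' (Nat.even_mul_pred_self r).two_dvd
  have hkey : r * ((r - 1) * (r - 1)) = 2 * ((r - 1) * r.choose 2) := by
    calc r * ((r - 1) * (r - 1)) = (r * (r - 1)) * (r - 1) := by ring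
      _ = (2 * r.choose 2) * (r - 1) := by rw [hchoose]
      _ = 2 * ((r - 1) * r.choose 2) := by ring
  rw [hkey] at hcard
  have hfinal : Nat.card S3 / 2 + Nat.card S4 / 2 ≤ (r - 1) * r.choose 2 := by omega
  exact hfinal
end

section
/- Let G be a finite simple graph. For each vertex x let t(x) denote the number of triangles of G all three of whose vertices are neighbors of x, and let p(x) denote the number of 3-element subsets of the neighborhood N(x) that span exactly two edges of G. Then ∑_{x∈V(G)} (3·t(x) + 2·p(x)) ≤ 4·c₄(G). -/
open SimpleGraph

/-- The number of edges of `G` spanned by a finset `s` of vertices (i.e. with both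
endpoints in `s`). -/
noncomputable def spannedEdges {V : Type*} (G : SimpleGraph V) (s : Finset V) : ℕ :=
  Nat.card {e : Sym2 V // e ∈ G.edgeSet ∧ ∀ v ∈ e, v ∈ s}

/-!
A labelled 4-cycle is a closed walk `a b c d` with `a ≠ c` and `b ≠ d`. The dihedral group of
order 8 acts freely on labelled 4-cycles, so there are exactly `8 c₄(G)` of them. Send each one to
its fan: `(a, {b, c, d})` if `ac` is an edge, and `(d, {a, b, c})` otherwise. If `s` is a triangle
in `N(x)`, the fibre over `(x, s)` contains the six cycles `x b c d` with `{b, c, d} = s`; if `s`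
induces a path `u m v`, it contains `x u m v`, `x v m u`, `u m v x` and `v m u x`. Summing over
the fibres gives `∑ₓ (6 t(x) + 4 p(x)) ≤ 8 c₄(G)`.
-/

open DihedralGroup Finset

theorem MulAction.card_dvd_card_of_stabilizer_eq_bot {G X : Type*} [Group G] [MulAction G X]
    [Finite X] (h : ∀ x : X, stabilizer G x = ⊥) : Nat.card G ∣ Nat.card X := by
  classical
  have := Fintype.ofFinite X
  rw [Nat.card_congr (selfEquivSigmaOrbits G X), Nat.card_sigma]
  refine Finset.dvd_sum fun ω _ => ?_
  rw [Nat.card_congr (orbitEquivQuotientStabilizer G _), h,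
    Nat.card_congr QuotientGroup.quotientBot.toEquiv]

theorem List.Nodup.length_le_natCard_subtype {α : Type*} [Finite α] {p : α → Prop}
    {l : List α} (hl : l.Nodup) (hp : ∀ a ∈ l, p a) : l.length ≤ Nat.card {a // p a} := by
  simpa using
    (hl.pmap (f := Subtype.mk) (H := hp) fun _ _ _ _ => congrArg Subtype.val).length_le_natCard

namespace SimpleGraph

variable {V : Type*} {G : SimpleGraph V}

lemma spannedEdges_eq_card_filter_sym2 [DecidableRel G.Adj] (s : Finset V) :
    spannedEdges G s = #{e ∈ s.sym2 | e ∈ G.edgeSet} := by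
  rw [spannedEdges, ← Nat.card_eq_finsetCard]
  exact Nat.card_congr (Equiv.subtypeEquivRight fun e => by simp [mem_sym2_iff, and_comm])

lemma spannedEdges_triple [DecidableEq V] [DecidableRel G.Adj] {a b c : V} (hab : a ≠ b)
    (hac : a ≠ c) (hbc : b ≠ c) :
    spannedEdges G {a, b, c} = (if G.Adj a b then 1 else 0) + (if G.Adj a c then 1 else 0)
      + (if G.Adj b c then 1 else 0) := by
  rw [spannedEdges_eq_card_filter_sym2]
  simp only [sym2_insert, image_insert, image_singleton, sym2_singleton, Sym2.diag, insert_union,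
    singleton_union, union_insert, filter_insert, Sym2.mk_isDiag_iff, not_mem_edgeSet_of_isDiag,
    ↓reduceIte, mem_edgeSet, filter_singleton, insert_empty_eq]
  split_ifs <;> simp [card_insert_of_notMem, hac, hbc, hab.symm, hac.symm, hbc.symm]

lemma exists_path_of_spannedEdges_eq_two [DecidableEq V] {s : Finset V} (hs : #s = 3)
    (h : spannedEdges G s = 2) :
    ∃ u m v, u ≠ v ∧ s = {u, m, v} ∧ G.Adj u m ∧ G.Adj m v ∧ ¬G.Adj u v := by
  classical
  obtain ⟨a, b, c, hab, hac, hbc, rfl⟩ := card_eq_three.mp hs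
  rw [spannedEdges_triple hab hac hbc] at h
  by_cases h₁ : G.Adj a b <;> by_cases h₂ : G.Adj a c <;> by_cases h₃ : G.Adj b c <;>
    simp only [h₁, h₂, h₃, if_true, if_false] at h <;> first
  | omega
  | exact ⟨b, a, c, hbc, insert_comm a b {c}, h₁.symm, h₂, h₃⟩
  | exact ⟨a, b, c, hac, rfl, h₁, h₃, h₂⟩
  | exact ⟨a, c, b, hab, by rw [pair_comm], h₂, h₃.symm, h₁⟩

variable (G) in
@[ext]
structure LabelledCycle (n : ℕ) where
  toFun : ZMod n → V
  injective : Function.Injective toFun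
  adj : ∀ i, G.Adj (toFun i) (toFun (i + 1))

namespace LabelledCycle

variable {n : ℕ}

instance [NeZero n] [Finite V] : Finite (G.LabelledCycle n) :=
  Finite.of_injective toFun fun _ _ => LabelledCycle.ext

instance : SMul (DihedralGroup n) (G.LabelledCycle n) where
  smul
  | r i, c => ⟨fun j => c.toFun (j + i), c.injective.comp (add_left_injective i),
      fun j => by simpa only [add_right_comm] using c.adj (j + i)⟩
  | sr i, c => ⟨fun j => c.toFun (i - j), c.injective.comp sub_right_injective,
      fun j => by simpa [sub_add_eq_sub_sub] using (c.adj (i - j - 1)).symm⟩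

@[simp] lemma r_smul_toFun (i j : ZMod n) (c : G.LabelledCycle n) :
    (r i • c).toFun j = c.toFun (j + i) := rfl

@[simp] lemma sr_smul_toFun (i j : ZMod n) (c : G.LabelledCycle n) :
    (sr i • c).toFun j = c.toFun (i - j) := rfl

instance : MulAction (DihedralGroup n) (G.LabelledCycle n) where
  one_smul c := by ext j; rw [one_def, r_smul_toFun, add_zero]
  mul_smul g h c := by
    ext j
    rcases g with i | i <;> rcases h with k | k <;>
      simp only [r_mul_r, r_mul_sr, sr_mul_r, sr_mul_sr, r_smul_toFun, sr_smul_toFun] <;>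
      congr 1 <;> ring

lemma stabilizer_eq_bot (hn : 2 < n) (c : G.LabelledCycle n) :
    MulAction.stabilizer (DihedralGroup n) c = ⊥ := by
  refine (Subgroup.eq_bot_iff_forall _).2 fun g hg => ?_
  rw [MulAction.mem_stabilizer_iff] at hg
  have hval (j : ZMod n) := congrArg (fun c : G.LabelledCycle n => c.toFun j) hg
  rcases g with i | i
  · rw [one_def, show i = 0 by simpa using c.injective (hval 0)]
  · have hi : i = 0 := by simpa using c.injective (hval 0)
    have h1 : (-1 : ZMod n) = 1 := c.injective (by simpa [hi] using hval 1)
    have h2 : ((2 : ℕ) : ZMod n) = 0 := by push_cast; linear_combination -h1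
    rw [ZMod.natCast_eq_zero_iff] at h2
    exact absurd (Nat.le_of_dvd two_pos h2) (by omega)

theorem two_mul_dvd_card [Finite V] (hn : 2 < n) : 2 * n ∣ Nat.card (G.LabelledCycle n) := by
  have : NeZero n := ⟨by omega⟩
  rw [← DihedralGroup.nat_card]
  exact MulAction.card_dvd_card_of_stabilizer_eq_bot (stabilizer_eq_bot hn)

def ofAdj {a b c d : V} (hab : G.Adj a b) (hbc : G.Adj b c) (hcd : G.Adj c d) (hda : G.Adj d a)
    (hac : a ≠ c) (hbd : b ≠ d) : G.LabelledCycle 4 where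
  toFun := ![a, b, c, d]
  injective i j h := by
    have := hab.ne; have := hbc.ne; have := hcd.ne; have := hda.ne
    fin_cases i <;> fin_cases j <;> first | rfl | simp_all [eq_comm]
  adj i := by fin_cases i; exacts [hab, hbc, hcd, hda]

def toWalk (c : G.LabelledCycle 4) : G.Walk (c.toFun 0) (c.toFun 0) :=
  .cons (c.adj 0) (.cons (c.adj 1) (.cons (c.adj 2) (.cons (c.adj 3) .nil)))

lemma toWalk_isCycle (c : G.LabelledCycle 4) : c.toWalk.IsCycle := by
  simp +decide [toWalk, Walk.cons_isCycle_iff, c.injective.eq_iff]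

lemma bijective_toWalk :
    Function.Bijective fun c : G.LabelledCycle 4 =>
      (⟨c.toFun 0, c.toWalk, c.toWalk_isCycle, rfl⟩ :
        (x : V) × {p : G.Walk x x // p.IsCycle ∧ p.length = 4}) := by
  refine ⟨fun c c' h => ?_, ?_⟩
  · have hv (k : ℕ) := congrArg
      (fun y : (x : V) × {p : G.Walk x x // p.IsCycle ∧ p.length = 4} => y.2.1.getVert k) h
    ext i
    fin_cases i
    exacts [hv 0, hv 1, hv 2, hv 3]
  · rintro ⟨x, p, hc, hl⟩
    match p, hc, hl with
    | .cons h₁ (.cons h₂ (.cons h₃ (.cons h₄ .nil))), hc, _ =>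
      refine ⟨ofAdj h₁ h₂ h₃ h₄ ?_ ?_, rfl⟩ <;>
        · rintro rfl
          simp [Walk.cons_isCycle_iff] at hc

theorem card_eq_eight_mul_cycleCount [Finite V] :
    Nat.card (G.LabelledCycle 4) = 8 * cycleCount G 4 := by
  rw [cycleCount, ← Nat.card_eq_of_bijective _ bijective_toWalk]
  exact (Nat.mul_div_cancel' (two_mul_dvd_card (by norm_num))).symm

variable [DecidableEq V] [DecidableRel G.Adj]

/-- When neither diagonal of the cycle is an edge, the result is not a fan over any triangle or
induced path, so such cycles are simply not counted. -/
def fan (c : G.LabelledCycle 4) : V × Finset V :=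
  if G.Adj (c.toFun 0) (c.toFun 2) then (c.toFun 0, {c.toFun 1, c.toFun 2, c.toFun 3})
  else (c.toFun 3, {c.toFun 0, c.toFun 1, c.toFun 2})

section

variable {a b c d : V} (hab : G.Adj a b) (hbc : G.Adj b c) (hcd : G.Adj c d) (hda : G.Adj d a)
  (hac : a ≠ c) (hbd : b ≠ d)

lemma fan_ofAdj_of_adj (h : G.Adj a c) : (ofAdj hab hbc hcd hda hac hbd).fan = (a, {b, c, d}) :=
  if_pos h

lemma fan_ofAdj_of_not_adj (h : ¬G.Adj a c) :
    (ofAdj hab hbc hcd hda hac hbd).fan = (d, {a, b, c}) :=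
  if_neg h

end

variable {x : V} {s : Finset V}

lemma six_le_card_fan_fiber [Finite V] (hs : G.IsNClique 3 s) (hx : ∀ v ∈ s, G.Adj x v) :
    6 ≤ Nat.card {c : G.LabelledCycle 4 // c.fan = (x, s)} := by
  have hne (e : Fin 3 ↪ s) {i j : Fin 3} (hij : i ≠ j) : (e i : V) ≠ e j :=
    fun h => hij (e.injective (Subtype.ext h))
  have hadj (e : Fin 3 ↪ s) {i j : Fin 3} (hij : i ≠ j) : G.Adj (e i) (e j) :=
    hs.isClique (e i).2 (e j).2 (hne e hij)
  have hspan (e : Fin 3 ↪ s) : ({(e 0).1, (e 1).1, (e 2).1} : Finset V) = s := by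
    refine eq_of_subset_of_card_le (by simp [insert_subset_iff]) ?_
    rw [hs.card_eq, (card_eq_three.2 ⟨_, _, _, hne e (by decide), hne e (by decide),
      hne e (by decide), rfl⟩)]
  let φ (e : Fin 3 ↪ s) : {c : G.LabelledCycle 4 // c.fan = (x, s)} :=
    ⟨ofAdj (hx _ (e 0).2) (hadj e (by decide : (0 : Fin 3) ≠ 1))
      (hadj e (by decide : (1 : Fin 3) ≠ 2)) (hx _ (e 2).2).symm (hx _ (e 1).2).ne
      (hne e (by decide)),
      by rw [fan_ofAdj_of_adj _ _ _ _ _ _ (hx _ (e 1).2), hspan]⟩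
  have hφ : Function.Injective φ := by
    intro e e' h
    have hv (k : ZMod 4) :=
      congrArg (fun c : {c : G.LabelledCycle 4 // c.fan = (x, s)} => c.1.toFun k) h
    ext i
    fin_cases i
    exacts [hv 1, hv 2, hv 3]
  calc 6 = Nat.card (Fin 3 ↪ s) := by
        simp [Nat.card_eq_fintype_card, Fintype.card_embedding_eq, hs.card_eq]
    _ ≤ _ := Nat.card_le_card_of_injective φ hφ

lemma four_le_card_fan_fiber [Finite V] (hs : #s = 3) (hx : ∀ v ∈ s, G.Adj x v)
    (h2 : spannedEdges G s = 2) : 4 ≤ Nat.card {c : G.LabelledCycle 4 // c.fan = (x, s)} := by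
  obtain ⟨u, m, v, huv, rfl, hum, hmv, hnuv⟩ := exists_path_of_spannedEdges_eq_two hs h2
  have hxu := hx u (by simp)
  have hxm := hx m (by simp)
  have hxv := hx v (by simp)
  have hrev : ({v, m, u} : Finset V) = {u, m, v} := by
    rw [insert_comm, pair_comm, insert_comm]
  refine List.Nodup.length_le_natCard_subtype (l :=
    [ofAdj hxu hum hmv hxv.symm hxm.ne huv,
      ofAdj hxv hmv.symm hum.symm hxu.symm hxm.ne huv.symm,
      ofAdj hum hmv hxv.symm hxu huv hxm.ne',
      ofAdj hmv.symm hum.symm hxu.symm hxv huv.symm hxm.ne']) ?_ ?_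
  · refine List.Nodup.of_map (fun c => (c.toFun 0, c.toFun 1)) ?_
    change [(x, u), (x, v), (u, m), (v, m)].Nodup
    simp [hxu.ne, hxv.ne, huv]
  · intro c hc
    simp only [List.mem_cons, List.not_mem_nil, or_false] at hc
    rcases hc with rfl | rfl | rfl | rfl
    · exact fan_ofAdj_of_adj _ _ _ _ _ _ hxm
    · rw [fan_ofAdj_of_adj _ _ _ _ _ _ hxm, hrev]
    · exact fan_ofAdj_of_not_adj _ _ _ _ _ _ hnuv
    · rw [fan_ofAdj_of_not_adj _ _ _ _ _ _ (fun h => hnuv h.symm), hrev]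

end LabelledCycle

variable (G) in
theorem sum_neighborhood_triangles_cherries_le_card_labelledCycle [Fintype V] :
    ∑ x : V, (6 * Nat.card {s : Finset V // G.IsNClique 3 s ∧ ∀ v ∈ s, G.Adj x v}
        + 4 * Nat.card {s : Finset V //
            #s = 3 ∧ (∀ v ∈ s, G.Adj x v) ∧ spannedEdges G s = 2})
      ≤ Nat.card (G.LabelledCycle 4) := by
  classical
  calc _ = ∑ x : V, ∑ s : Finset V,
        ((if G.IsNClique 3 s ∧ ∀ v ∈ s, G.Adj x v then 6 else 0)
          + if #s = 3 ∧ (∀ v ∈ s, G.Adj x v) ∧ spannedEdges G s = 2 then 4 else 0) := by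
        simp [sum_add_distrib, sum_ite, Nat.card_eq_fintype_card, Fintype.card_subtype, mul_comm]
    _ ≤ ∑ x : V, ∑ s : Finset V, Nat.card {c : G.LabelledCycle 4 // c.fan = (x, s)} := by
        gcongr with x _ s _
        split_ifs with hT hP hP
        · obtain ⟨u, m, v, huv, rfl, -, -, hnuv⟩ :=
            exists_path_of_spannedEdges_eq_two hP.1 hP.2.2
          exact absurd (hT.1.isClique (by simp) (by simp) huv) hnuv
        · exact LabelledCycle.six_le_card_fan_fiber hT.1 hT.2
        · exact LabelledCycle.four_le_card_fan_fiber hP.1 hP.2.1 hP.2.2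
        · exact Nat.zero_le _
    _ = Nat.card (G.LabelledCycle 4) := by
        rw [← Fintype.sum_prod_type', ← Nat.card_sigma,
          Nat.card_congr (Equiv.sigmaFiberEquiv LabelledCycle.fan)]

end SimpleGraph

/-- For every finite simple graph `G`: summing over all vertices `x` three times the number of
triangles inside the neighborhood of `x` plus twice the number of 3-subsets of the neighborhood
of `x` spanning exactly two edges is at most `4·c₄(G)`. -/
theorem sum_cherries_le_four_c4 {V : Type*} [Fintype V] (G : SimpleGraph V) :
    ∑ x : V, (3 * Nat.card {s : Finset V // G.IsNClique 3 s ∧ ∀ v ∈ s, G.Adj x v}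
        + 2 * Nat.card {s : Finset V //
            s.card = 3 ∧ (∀ v ∈ s, G.Adj x v) ∧ spannedEdges G s = 2})
      ≤ 4 * cycleCount G 4 := by
  have h := G.sum_neighborhood_triangles_cherries_le_card_labelledCycle
  rw [LabelledCycle.card_eq_eight_mul_cycleCount] at h
  have hfactor (a b : ℕ) : 6 * a + 4 * b = 2 * (3 * a + 2 * b) := by ring
  simp only [hfactor, ← mul_sum] at h
  omega
end

section
/- Let r ≥ 3 and let r = r₁ + ⋯ + r_l be any partition of r into positive integers. Then there exists a nonempty finite simple r-regular graph G such that for every vertex x of G, the subgraph of G induced on the neighborhood N(x) is isomorphic to the disjoint union of the complete graphs K_{r₁}, …, K_{r_l}; consequently, for every vertex x, the number of triangles of G containing x equals ∑_{i=1}^{l} C(r_i, 2) and the number of 4-cycles of G containing x equals ∑_{i=1}^{l} r_i·C(r_i − 1, 2). -/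
/-!
Induction on the number of cliques, keeping the invariant that every 4-cycle spans a `K₄`.
Given such a graph `G` whose neighbourhoods are `K_{r₂} ⊔ ⋯ ⊔ K_{r_l}`, choose a finite field `F`
and injections `φ : V(G) → F`, `ψ : Fin (r₁ + 1) → F`. Take copies of `G` on the layers
`F × Fin (r₁ + 1)`, and for every vertex `v` and intercept `f₀` add the clique on the points
`(v, f₀ + ψ γ * φ v, γ)`. Each neighbourhood gains a disjoint `K_{r₁}`. A 4-cycle alternating
between layer edges and clique edges at adjacent `v, w` would force
`(ψ γ - ψ γ') * (φ v - φ w) = 0`, so 4-cycles still span `K₄`'s.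

Closed walks at `x` that are 3-cycles correspond to ordered pairs of adjacent vertices of `N(x)`
and, thanks to the invariant, those that are 4-cycles to ordered triangles of `N(x)`. In
`K_{r₁} ⊔ ⋯ ⊔ K_{r_l}` there are `∑ rᵢ (rᵢ - 1)` and `∑ rᵢ (rᵢ - 1) (rᵢ - 2)` of these, and every
cycle is traversed by two such walks.
-/

open SimpleGraph

/-- The disjoint union of complete graphs `K_{rs 0}, …, K_{rs (l-1)}`: two vertices are
adjacent iff they are distinct and lie in the same component. -/
def cliquesGraph (l : ℕ) (rs : Fin l → ℕ) : SimpleGraph ((i : Fin l) × Fin (rs i)) :=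
  SimpleGraph.fromRel (fun a b => a.1 = b.1)

lemma Nat.descFactorial_two_eq_two_mul_choose (n : ℕ) : n.descFactorial 2 = 2 * n.choose 2 := by
  rw [Nat.descFactorial_eq_factorial_mul_choose, Nat.factorial_two]

lemma Nat.descFactorial_three_eq_two_mul_mul_choose (n : ℕ) :
    n.descFactorial 3 = 2 * (n * (n - 1).choose 2) := by
  cases n with
  | zero => rfl
  | succ n =>
    rw [Nat.succ_descFactorial_succ, Nat.descFactorial_two_eq_two_mul_choose, Nat.add_sub_cancel]
    ring

namespace SimpleGraph

section Counting

variable {V : Type*} {G : SimpleGraph V}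

def FourCyclesAreCliques (G : SimpleGraph V) : Prop :=
  ∀ ⦃x a b c : V⦄, G.Adj x a → G.Adj a b → G.Adj b c → G.Adj c x → x ≠ b → a ≠ c →
    G.Adj x b ∧ G.Adj a c

def fiberCliques {ι : Type*} (t : V → ι) : SimpleGraph V :=
  fromRel fun a b => t a = t b

@[simp]
lemma fiberCliques_adj {ι : Type*} {t : V → ι} {a b : V} :
    (fiberCliques t).Adj a b ↔ a ≠ b ∧ t a = t b := by
  simp [fiberCliques, eq_comm]

def topEmbeddingOfPairwise {β : Type*} (f : β → V) (hf : Pairwise fun i j => G.Adj (f i) (f j)) :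
    completeGraph β ↪g G where
  toFun := f
  inj' _ _ hij := by_contra fun h => (hf h).ne hij
  map_rel_iff' := ⟨fun h hij => h.ne (congrArg f hij), fun h => hf h⟩

lemma Walk.isCycle_triangle {x a b : V} (hxa : G.Adj x a) (hab : G.Adj a b) (hbx : G.Adj b x) :
    (cons hxa (cons hab (cons hbx nil))).IsCycle := by
  have := hxa.ne; have := hab.ne; have := hbx.ne
  aesop (add simp [Walk.cons_isCycle_iff, Walk.edges])

lemma Walk.isCycle_square {x a b c : V} (hxa : G.Adj x a) (hab : G.Adj a b) (hbc : G.Adj b c)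
    (hcx : G.Adj c x) (hxb : x ≠ b) (hac : a ≠ c) :
    (cons hxa (cons hab (cons hbc (cons hcx nil)))).IsCycle := by
  have := hxa.ne; have := hab.ne; have := hbc.ne; have := hcx.ne
  aesop (add simp [Walk.cons_isCycle_iff, Walk.edges])

lemma card_isCycle_length_three (x : V) :
    Nat.card {p : G.Walk x x // p.IsCycle ∧ p.length = 3} =
      Nat.card (completeGraph (Fin 2) ↪g G.induce (G.neighborSet x)) := by
  have hx (f : completeGraph (Fin 2) ↪g G.induce (G.neighborSet x)) i : G.Adj x (f i) := (f i).2
  have hf (f : completeGraph (Fin 2) ↪g G.induce (G.neighborSet x)) {i j} (h : i ≠ j) :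
      G.Adj (f i) (f j) := f.map_adj_iff.2 h
  refine (Nat.card_eq_of_bijective (fun f => ⟨.cons (hx f 0) (.cons (hf f (by decide))
    (.cons (hx f 1).symm .nil)), Walk.isCycle_triangle .., rfl⟩) ⟨fun f g hfg => ?_, ?_⟩).symm
  · have := congrArg (fun p => p.1.support) hfg
    simp only [Walk.support_cons, Walk.support_nil, List.cons.injEq, and_true, true_and] at this
    ext i; fin_cases i
    exacts [this.1, this.2]
  · rintro ⟨p, -, hp⟩
    match p, hp with
    | .cons h₁ (.cons h₂ (.cons h₃ .nil)), _ =>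
    refine ⟨topEmbeddingOfPairwise ![⟨_, h₁⟩, ⟨_, h₃.symm⟩] ?_, rfl⟩
    intro i j hij
    fin_cases i <;> fin_cases j <;> simp_all [h₂.symm]

lemma card_isCycle_length_four (hG : G.FourCyclesAreCliques) (x : V) :
    Nat.card {p : G.Walk x x // p.IsCycle ∧ p.length = 4} =
      Nat.card (completeGraph (Fin 3) ↪g G.induce (G.neighborSet x)) := by
  have hx (f : completeGraph (Fin 3) ↪g G.induce (G.neighborSet x)) i : G.Adj x (f i) := (f i).2
  have hf (f : completeGraph (Fin 3) ↪g G.induce (G.neighborSet x)) {i j} (h : i ≠ j) :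
      G.Adj (f i) (f j) := f.map_adj_iff.2 h
  refine (Nat.card_eq_of_bijective (fun f => ⟨.cons (hx f 0) (.cons (hf f (by decide))
    (.cons (hf f (by decide)) (.cons (hx f 2).symm .nil))),
    Walk.isCycle_square _ _ _ _ (hx f 1).ne (hf f (by decide)).ne, rfl⟩)
    ⟨fun f g hfg => ?_, ?_⟩).symm
  · have := congrArg (fun p => p.1.support) hfg
    simp only [Walk.support_cons, Walk.support_nil, List.cons.injEq, and_true, true_and] at this
    ext i; fin_cases i
    exacts [this.1, this.2.1, this.2.2]
  · rintro ⟨p, hp, hl⟩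
    match p, hp, hl with
    | .cons h₁ (.cons h₂ (.cons h₃ (.cons h₄ .nil))), hp, _ =>
    have hnodup := hp.support_nodup
    simp only [Walk.support_cons, Walk.support_nil, List.tail_cons, List.nodup_cons,
      List.mem_cons, List.not_mem_nil] at hnodup
    obtain ⟨hxb, hac⟩ := hG h₁ h₂ h₃ h₄ (by tauto) (by tauto)
    refine ⟨topEmbeddingOfPairwise ![⟨_, h₁⟩, ⟨_, hxb⟩, ⟨_, h₄.symm⟩] ?_, rfl⟩
    intro i j hij
    fin_cases i <;> fin_cases j <;> simp_all [h₂.symm, h₃.symm, hac.symm]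

lemma card_completeGraph_embedding_fiberCliques {ι : Type*} [Finite V] [Fintype ι]
    (t : V → ι) (k : ℕ) [NeZero k] :
    Nat.card (completeGraph (Fin k) ↪g fiberCliques t) =
      ∑ i, (Nat.card {a // t a = i}).descFactorial k := by
  have hfiber (f : completeGraph (Fin k) ↪g fiberCliques t) j : t (f j) = t (f 0) := by
    obtain rfl | h := eq_or_ne j 0
    · rfl
    · exact (fiberCliques_adj.1 (f.map_adj_iff.2 h)).2
  let e (i : ι) : {f : completeGraph (Fin k) ↪g fiberCliques t // t (f 0) = i} ≃
      (Fin k ↪ {a // t a = i}) :=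
    { toFun f := ⟨fun j => ⟨f.1 j, (hfiber f.1 j).trans f.2⟩,
        fun j j' h => f.1.injective (congrArg Subtype.val h)⟩
      invFun g := ⟨topEmbeddingOfPairwise (fun j => (g j).1) fun j j' h =>
        fiberCliques_adj.2 ⟨fun h' => h (g.injective (Subtype.ext h')),
          (g j).2.trans (g j').2.symm⟩, (g 0).2⟩
      left_inv _ := rfl
      right_inv _ := rfl }
  classical
  have := Fintype.ofFinite V
  rw [Nat.card_congr (Equiv.sigmaFiberEquiv fun f : completeGraph (Fin k) ↪g fiberCliques t =>
    t (f 0)).symm, Nat.card_sigma]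
  refine Finset.sum_congr rfl fun i _ => ?_
  rw [Nat.card_congr (e i), Nat.card_eq_fintype_card, Fintype.card_embedding_eq,
    Fintype.card_fin, Nat.card_eq_fintype_card]

end Counting

section SupFiberCliques

variable {V S T : Type*} {A : SimpleGraph V} {s : V → S} {t : V → T}

/- Besides the two pure cases, a square either alternates between `A`-edges and fibre edges,
which `hnot_alt` excludes, or has two of its vertices joined both by a path of `A`-edges and by a
path of fibre edges; these then share their layer and their fibre, hence coincide. -/
lemma FourCyclesAreCliques.sup_fiberCliques (hA : A.FourCyclesAreCliques)
    (hs : ∀ ⦃x y⦄, A.Adj x y → s x = s y) (hst : ∀ ⦃x y⦄, s x = s y → t x = t y → x = y)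
    (hnot_alt : ∀ ⦃x a b c⦄, A.Adj x a → t a = t b → a ≠ b → A.Adj b c → t c = t x → False) :
    (A ⊔ fiberCliques t).FourCyclesAreCliques := by
  intro x a b c h₁ h₂ h₃ h₄ hxb hac
  simp only [sup_adj, fiberCliques_adj] at *
  rcases h₁ with h₁ | h₁ <;> rcases h₂ with h₂ | h₂ <;> rcases h₃ with h₃ | h₃ <;>
    rcases h₄ with h₄ | h₄
  · exact (hA h₁ h₂ h₃ h₄ hxb hac).imp .inl .inl
  all_goals grind

lemma disjoint_neighborSet_fiberCliques (hs : ∀ ⦃x y⦄, A.Adj x y → s x = s y)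
    (hst : ∀ ⦃x y⦄, s x = s y → t x = t y → x = y) (x : V) :
    Disjoint (A.neighborSet x) ((fiberCliques t).neighborSet x) :=
  Set.disjoint_left.2 fun _ ha hb =>
    (fiberCliques_adj.1 hb).1 (hst (hs ha) (fiberCliques_adj.1 hb).2)

open Classical in
noncomputable def neighborSetSupFiberCliquesIso (hs : ∀ ⦃x y⦄, A.Adj x y → s x = s y)
    (hst : ∀ ⦃x y⦄, s x = s y → t x = t y → x = y) (x : V) :
    (A ⊔ fiberCliques t).induce ((A ⊔ fiberCliques t).neighborSet x) ≃g
      A.induce (A.neighborSet x) ⊕g completeGraph ((fiberCliques t).neighborSet x) :=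
  Iso.symm
  { toFun := Sum.elim (fun a => ⟨a, Or.inl a.2⟩) (fun b => ⟨b, Or.inr b.2⟩)
    invFun y := if h : A.Adj x y then .inl ⟨y, h⟩ else .inr ⟨y, y.2.resolve_left h⟩
    left_inv := by
      rintro (a | b)
      · exact dif_pos a.2
      · exact dif_neg (Set.disjoint_right.1 (disjoint_neighborSet_fiberCliques hs hst x) b.2)
    right_inv y := by
      dsimp only
      split <;> rfl
    map_rel_iff' := by
      have hAA {a a'} (ha : A.Adj x a) (ha' : A.Adj x a') :
          (A ⊔ fiberCliques t).Adj a a' ↔ A.Adj a a' := by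
        have := hs ha; have := hs ha'
        simp only [sup_adj, fiberCliques_adj]; grind
      have hAB {a b} (ha : A.Adj x a) (hb : (fiberCliques t).Adj x b) :
          ¬(A ⊔ fiberCliques t).Adj a b := by
        have := hs ha
        simp only [sup_adj, fiberCliques_adj] at hb ⊢; grind [A.irrefl]
      have hBB {b b'} (hb : (fiberCliques t).Adj x b) (hb' : (fiberCliques t).Adj x b') :
          (A ⊔ fiberCliques t).Adj b b' ↔ b ≠ b' := by
        simp only [sup_adj, fiberCliques_adj] at hb hb' ⊢; grind [A.irrefl]
      rintro (⟨a, ha⟩ | ⟨b, hb⟩) (⟨a', ha'⟩ | ⟨b', hb'⟩)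
      · exact hAA ha ha'
      · exact iff_of_false (hAB ha hb') (by simp)
      · exact iff_of_false (fun h => hAB ha' hb h.symm) (by simp)
      · exact (hBB hb hb').trans (by simp) }

end SupFiberCliques

section BoxProdBot

variable {V L : Type*} {G : SimpleGraph V}

lemma boxProd_bot_adj {z w : V × L} :
    (G □ (⊥ : SimpleGraph L)).Adj z w ↔ G.Adj z.1 w.1 ∧ z.2 = w.2 := by
  simp

lemma FourCyclesAreCliques.boxProd_bot (hG : G.FourCyclesAreCliques) :
    (G □ (⊥ : SimpleGraph L)).FourCyclesAreCliques := by
  intro x a b c h₁ h₂ h₃ h₄ hxb hac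
  simp only [boxProd_bot_adj] at *
  have hxb' : x.1 ≠ b.1 := fun h => hxb (Prod.ext h (h₁.2.trans h₂.2))
  have hac' : a.1 ≠ c.1 := fun h => hac (Prod.ext h (h₂.2.trans h₃.2))
  obtain ⟨hxb₁, hac₁⟩ := hG h₁.1 h₂.1 h₃.1 h₄.1 hxb' hac'
  exact ⟨⟨hxb₁, h₁.2.trans h₂.2⟩, ⟨hac₁, h₂.2.trans h₃.2⟩⟩

def boxProdBotNeighborIso (z : V × L) :
    (G □ (⊥ : SimpleGraph L)).induce ((G □ ⊥).neighborSet z) ≃g G.induce (G.neighborSet z.1) where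
  toFun w := ⟨w.1.1, (boxProd_bot_adj.1 w.2).1⟩
  invFun v := ⟨(v, z.2), boxProd_bot_adj.2 ⟨v.2, rfl⟩⟩
  left_inv w := Subtype.ext (Prod.ext rfl (boxProd_bot_adj.1 w.2).2)
  right_inv v := rfl
  map_rel_iff' {w w'} := by
    simp only [Equiv.coe_fn_mk, induce_adj, boxProd_bot_adj, iff_self_and]
    exact fun _ => (boxProd_bot_adj.1 w.2).2.symm.trans (boxProd_bot_adj.1 w'.2).2

end BoxProdBot

section CliqueExtension

variable {V F C : Type*} [Field F] {G : SimpleGraph V} {φ : V → F} {ψ : C → F}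

def cliqueLine (φ : V → F) (ψ : C → F) (z : V × F × C) : V × F :=
  (z.1, z.2.1 - ψ z.2.2 * φ z.1)

/- The vertex `(v, f, γ)` is the copy of `v` in the layer `(f, γ)`; the added cliques are the
fibres of `cliqueLine`, which records `v` and the intercept `f - ψ γ * φ v`. -/
def cliqueExtension (G : SimpleGraph V) (φ : V → F) (ψ : C → F) : SimpleGraph (V × F × C) :=
  (G □ (⊥ : SimpleGraph (F × C))) ⊔ fiberCliques (cliqueLine φ ψ)

lemma eq_of_snd_eq_of_cliqueLine_eq {z w : V × F × C} (h : z.2 = w.2)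
    (h' : cliqueLine φ ψ z = cliqueLine φ ψ w) : z = w :=
  Prod.ext (Prod.ext_iff.1 h').1 h

lemma not_alternating_square_cliqueExtension (hφ : Function.Injective φ)
    (hψ : Function.Injective ψ) {x a b c : V × F × C}
    (hxa : (G □ (⊥ : SimpleGraph (F × C))).Adj x a) (hab : cliqueLine φ ψ a = cliqueLine φ ψ b)
    (hne : a ≠ b) (hbc : (G □ (⊥ : SimpleGraph (F × C))).Adj b c)
    (hcx : cliqueLine φ ψ c = cliqueLine φ ψ x) : False := by
  obtain ⟨v, f, γ⟩ := x; obtain ⟨u, g, δ⟩ := a; obtain ⟨w, f', γ'⟩ := b; obtain ⟨y, h, ε⟩ := c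
  simp only [boxProd_bot_adj, cliqueLine, Prod.mk.injEq, ne_eq] at *
  obtain ⟨hvu, rfl, rfl⟩ := hxa
  obtain ⟨rfl, h₁⟩ := hab
  obtain ⟨-, rfl, rfl⟩ := hbc
  obtain ⟨rfl, h₂⟩ := hcx
  have key : (ψ γ' - ψ γ) * (φ u - φ y) = 0 := by linear_combination h₁ + h₂
  rcases mul_eq_zero.1 key with h | h
  · obtain rfl := hψ (sub_eq_zero.1 h)
    exact hne ⟨rfl, by linear_combination h₁, rfl⟩
  · exact hvu.ne (hφ (sub_eq_zero.1 h)).symm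

lemma mem_neighborSet_fiberCliques_cliqueLine {z y : V × F × C} :
    y ∈ (fiberCliques (cliqueLine φ ψ)).neighborSet z ↔
      y.2.2 ≠ z.2.2 ∧ y = (z.1, z.2.1 + (ψ y.2.2 - ψ z.2.2) * φ z.1, y.2.2) := by
  obtain ⟨v, f, γ⟩ := z; obtain ⟨w, g, δ⟩ := y
  simp only [mem_neighborSet, fiberCliques_adj, cliqueLine, ne_eq, Prod.mk.injEq, and_true]
  constructor
  · rintro ⟨hne, rfl, h⟩
    refine ⟨fun hδ => hne ?_, rfl, by linear_combination -h⟩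
    subst hδ
    simp_all
  · rintro ⟨hδ, rfl, rfl⟩
    exact ⟨fun h => hδ (by simp_all), rfl, by ring⟩

def cliqueLineNeighborEquiv (z : V × F × C) :
    (fiberCliques (cliqueLine φ ψ)).neighborSet z ≃ {γ : C // γ ≠ z.2.2} where
  toFun y := ⟨y.1.2.2, (mem_neighborSet_fiberCliques_cliqueLine.1 y.2).1⟩
  invFun γ := ⟨(z.1, z.2.1 + (ψ γ - ψ z.2.2) * φ z.1, γ),
    mem_neighborSet_fiberCliques_cliqueLine.2 ⟨γ.2, rfl⟩⟩
  left_inv y := Subtype.ext (mem_neighborSet_fiberCliques_cliqueLine.1 y.2).2.symm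
  right_inv _ := rfl

lemma FourCyclesAreCliques.cliqueExtension (hG : G.FourCyclesAreCliques)
    (hφ : Function.Injective φ) (hψ : Function.Injective ψ) :
    (cliqueExtension G φ ψ).FourCyclesAreCliques :=
  hG.boxProd_bot.sup_fiberCliques (fun _ _ h => (boxProd_bot_adj.1 h).2)
    (fun _ _ => eq_of_snd_eq_of_cliqueLine_eq)
    (fun _ _ _ _ => not_alternating_square_cliqueExtension hφ hψ)

noncomputable def cliqueExtensionNeighborIso (z : V × F × C) :
    (cliqueExtension G φ ψ).induce ((cliqueExtension G φ ψ).neighborSet z) ≃g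
      G.induce (G.neighborSet z.1) ⊕g completeGraph {γ : C // γ ≠ z.2.2} :=
  (neighborSetSupFiberCliquesIso (fun _ _ h => (boxProd_bot_adj.1 h).2)
    (fun _ _ => eq_of_snd_eq_of_cliqueLine_eq) z).trans
    ((boxProdBotNeighborIso z).sumCongr (Iso.completeGraph (cliqueLineNeighborEquiv z)))

end CliqueExtension

end SimpleGraph

lemma cliquesGraph_eq_fiberCliques (l : ℕ) (rs : Fin l → ℕ) :
    cliquesGraph l rs = fiberCliques Sigma.fst :=
  rfl

lemma card_completeGraph_embedding_cliquesGraph {l : ℕ} (rs : Fin l → ℕ) (k : ℕ) [NeZero k] :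
    Nat.card (completeGraph (Fin k) ↪g cliquesGraph l rs) = ∑ i, (rs i).descFactorial k := by
  simp_rw [cliquesGraph_eq_fiberCliques, card_completeGraph_embedding_fiberCliques,
    Nat.card_congr (Equiv.sigmaSubtype _), Nat.card_fin]

def cliquesGraphSuccIso (l : ℕ) (rs : Fin (l + 1) → ℕ) :
    cliquesGraph (l + 1) rs ≃g cliquesGraph l (fun i => rs i.succ) ⊕g completeGraph (Fin (rs 0)) :=
  Iso.symm
  { toFun := Sum.elim (fun a => ⟨a.1.succ, a.2⟩) (fun s => ⟨0, s⟩)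
    invFun a := Fin.cases (motive := fun i => Fin (rs i) → _) .inr (fun i s => .inl ⟨i, s⟩) a.1 a.2
    left_inv := by rintro (⟨i, s⟩ | s) <;> rfl
    right_inv := by
      rintro ⟨i, s⟩
      induction i using Fin.cases <;> rfl
    map_rel_iff' := by
      rintro (⟨i, s⟩ | s) (⟨j, s'⟩ | s') <;>
        simp [cliquesGraph_eq_fiberCliques, Fin.succ_ne_zero, (Fin.succ_ne_zero _).symm] }

section NeighborhoodCliques

variable {V : Type*} {G : SimpleGraph V} {x : V} {l : ℕ} {rs : Fin l → ℕ}

lemma card_neighborSet_of_iso (e : G.induce (G.neighborSet x) ≃g cliquesGraph l rs) :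
    Nat.card (G.neighborSet x) = ∑ i, rs i := by
  simp [Nat.card_congr e.toEquiv]

lemma cycleCountAt_three_of_iso (e : G.induce (G.neighborSet x) ≃g cliquesGraph l rs) :
    cycleCountAt G x 3 = ∑ i, (rs i).choose 2 := by
  rw [cycleCountAt, card_isCycle_length_three, Nat.card_congr (RelIso.relEmbeddingCongr Iso.refl e),
    card_completeGraph_embedding_cliquesGraph]
  simp_rw [Nat.descFactorial_two_eq_two_mul_choose, ← Finset.mul_sum]
  exact Nat.mul_div_cancel_left _ two_pos

lemma cycleCountAt_four_of_iso (hG : G.FourCyclesAreCliques)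
    (e : G.induce (G.neighborSet x) ≃g cliquesGraph l rs) :
    cycleCountAt G x 4 = ∑ i, rs i * (rs i - 1).choose 2 := by
  rw [cycleCountAt, card_isCycle_length_four hG,
    Nat.card_congr (RelIso.relEmbeddingCongr Iso.refl e), card_completeGraph_embedding_cliquesGraph]
  simp_rw [Nat.descFactorial_three_eq_two_mul_mul_choose, ← Finset.mul_sum]
  exact Nat.mul_div_cancel_left _ two_pos

end NeighborhoodCliques

theorem exists_fourCyclesAreCliques_neighborSet_iso_cliquesGraph (l : ℕ) (rs : Fin l → ℕ) :
    ∃ (V : Type) (G : SimpleGraph V), Finite V ∧ Nonempty V ∧ G.FourCyclesAreCliques ∧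
      ∀ x, Nonempty (G.induce (G.neighborSet x) ≃g cliquesGraph l rs) := by
  induction l with
  | zero =>
    refine ⟨Unit, ⊥, inferInstance, inferInstance, fun _ _ _ _ h => h.elim, fun x => ?_⟩
    have : IsEmpty ((⊥ : SimpleGraph Unit).neighborSet x) := ⟨fun y => y.2⟩
    exact ⟨⟨Equiv.equivOfIsEmpty _ _, fun {a} => isEmptyElim a⟩⟩
  | succ l ih =>
    obtain ⟨V, G, _, _, hG, hiso⟩ := ih fun i => rs i.succ
    have := Fintype.ofFinite V
    obtain ⟨p, hp, hprime⟩ := Nat.exists_infinite_primes (Fintype.card V + (rs 0 + 1))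
    have := Fact.mk hprime
    obtain ⟨φ⟩ : Nonempty (V ↪ ZMod p) :=
      Function.Embedding.nonempty_of_card_le (by rw [ZMod.card]; omega)
    obtain ⟨ψ⟩ : Nonempty (Fin (rs 0 + 1) ↪ ZMod p) :=
      Function.Embedding.nonempty_of_card_le (by rw [ZMod.card, Fintype.card_fin]; omega)
    refine ⟨V × ZMod p × Fin (rs 0 + 1), cliqueExtension G φ ψ, inferInstance, inferInstance,
      hG.cliqueExtension φ.injective ψ.injective, fun z => ?_⟩
    obtain ⟨e⟩ := hiso z.1
    exact ⟨(cliqueExtensionNeighborIso z).trans ((e.sumCongr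
      (Iso.completeGraph (finSuccAboveEquiv z.2.2).symm)).trans (cliquesGraphSuccIso l rs).symm)⟩

theorem exists_regular_graph_with_clique_neighborhoods_general
    (r l : ℕ) (rs : Fin l → ℕ)
    (hsum : ∑ i, rs i = r) :
    ∃ (V : Type) (G : SimpleGraph V), Finite V ∧ Nonempty V ∧ IsRegularGraph G r ∧
      (∀ x : V, Nonempty ((SimpleGraph.induce (G.neighborSet x) G) ≃g cliquesGraph l rs)) ∧
      (∀ x : V, cycleCountAt G x 3 = ∑ i, (rs i).choose 2) ∧
      (∀ x : V, cycleCountAt G x 4 = ∑ i, rs i * (rs i - 1).choose 2) := by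
  obtain ⟨V, G, hfin, hne, hG, hiso⟩ :=
    exists_fourCyclesAreCliques_neighborSet_iso_cliquesGraph l rs
  refine ⟨V, G, hfin, hne, fun x => ?_, hiso, fun x => ?_, fun x => ?_⟩ <;> obtain ⟨e⟩ := hiso x
  · rw [card_neighborSet_of_iso e, hsum]
  · exact cycleCountAt_three_of_iso e
  · exact cycleCountAt_four_of_iso hG e

/-- For every `r ≥ 3` and every partition `r = r₁ + ⋯ + r_l` into positive integers, there is a
nonempty finite simple `r`-regular graph `G` such that for every vertex `x` the subgraph induced
on the neighborhood of `x` is isomorphic to the disjoint union `K_{r₁} ⊔ ⋯ ⊔ K_{r_l}`;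
consequently every vertex lies on exactly `∑ C(r_i, 2)` triangles and exactly
`∑ r_i·C(r_i − 1, 2)` four-cycles. -/
theorem exists_regular_graph_with_clique_neighborhoods
    (r l : ℕ) (hr : 3 ≤ r) (rs : Fin l → ℕ) (hpos : ∀ i, 1 ≤ rs i)
    (hsum : ∑ i, rs i = r) :
    ∃ (V : Type) (G : SimpleGraph V), Finite V ∧ Nonempty V ∧ IsRegularGraph G r ∧
      (∀ x : V, Nonempty ((SimpleGraph.induce (G.neighborSet x) G) ≃g cliquesGraph l rs)) ∧
      (∀ x : V, cycleCountAt G x 3 = ∑ i, (rs i).choose 2) ∧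
      (∀ x : V, cycleCountAt G x 4 = ∑ i, rs i * (rs i - 1).choose 2) :=
  exists_regular_graph_with_clique_neighborhoods_general r l rs hsum
end

section
/- For any positive integers g and r, and any integers s₁, …, s_r ≥ 2, there exists a nonempty finite set V and a finite indexed family (E_t)_{t∈T} of subsets of V such that: (1) every vertex v ∈ V belongs to exactly r of the sets E_t, and the multiset of sizes of the sets containing v is exactly {s₁, …, s_r}; and (2) the hypergraph has girth at least g, i.e. there do not exist an integer k with 2 ≤ k < g, distinct vertices x₀, …, x_{k−1} ∈ V, and distinct indices t₀, …, t_{k−1} ∈ T such that {x_j, x_{(j+1 mod k)}} ⊆ E_{t_j} for every 0 ≤ j ≤ k−1. -/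
/-!
Let `G` be a finite group with elements `σ i` of order `s i` such that no nonempty reduced
word `σ i₁ ^ m₁ ⋯ σ iₖ ^ mₖ` (consecutive colours distinct, `0 < mⱼ < s iⱼ`) of length `< g`
equals `1`.
Take the elements of `G` as vertices and the left cosets of the subgroups `⟨σ i⟩` as hyperedges:
every vertex lies in exactly one coset of each colour `i`, of size `s i`, and a Berge cycle of
length `k` yields a reduced word of length `k` equal to `1`.

Such a group is obtained by letting the free product of the cyclic groups `ℤ/s i` act on its
normal forms of length `≤ g`, where a generator leaves a word of length `g` alone instead of
extending it. This is still an action by permutations of a finite set, and a normal form of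
length `≤ g` sends the empty word to itself, so it does not act trivially.
-/

def permOfIterateSuccEqSelf {α : Type*} (f : α → α) (n : ℕ) (hf : ∀ x, f^[n + 1] x = x) :
    Equiv.Perm α where
  toFun := f
  invFun := f^[n]
  left_inv x := by rw [← Function.iterate_succ_apply, hf]
  right_inv x := by rw [← Function.iterate_succ_apply' f n x, hf]

namespace CyclicFreeProduct

variable {ι : Type*} (s : ι → ℕ)

/-- A syllable `(i, m)` stands for `σᵢ ^ m`: reduced words are the normal forms of the free
product of cyclic groups of orders `s i`. -/
def IsReducedWord (l : List (ι × ℕ)) : Prop :=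
  l.IsChain (fun a b => a.1 ≠ b.1) ∧ ∀ p ∈ l, 0 < p.2 ∧ p.2 < s p.1

lemma isReducedWord_nil : IsReducedWord s [] := ⟨List.IsChain.nil, by simp⟩

def HeadNe (i : ι) (l : List (ι × ℕ)) : Prop := ∀ q ∈ l.head?, i ≠ q.1

lemma isReducedWord_cons {i : ι} {m : ℕ} {l : List (ι × ℕ)} :
    IsReducedWord s ((i, m) :: l) ↔
      HeadNe i l ∧ 0 < m ∧ m < s i ∧ IsReducedWord s l := by
  simp only [IsReducedWord, HeadNe, List.isChain_cons, List.forall_mem_cons]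
  tauto

lemma exists_eq_cons_of_not_headNe {i : ι} {l : List (ι × ℕ)} (hd : ¬HeadNe i l) :
    ∃ m u, l = (i, m) :: u := by
  match l with
  | (j, m) :: u => exact ⟨m, u, by simpa [HeadNe, eq_comm] using hd⟩
  | [] => simp [HeadNe] at hd

variable (g : ℕ)

def truncatedWords : Set (List (ι × ℕ)) := {l | l.length ≤ g ∧ IsReducedWord s l}

lemma nil_mem_truncatedWords : [] ∈ truncatedWords s g := ⟨Nat.zero_le g, isReducedWord_nil s⟩

lemma finite_truncatedWords [Finite ι] : (truncatedWords s g).Finite := by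
  obtain ⟨M, hM⟩ := (Set.finite_range s).bddAbove
  let S : Set (ι × ℕ) := Set.univ ×ˢ Set.Iio M
  refine ((List.finite_length_le (α := S) g).image (List.map Subtype.val)).subset ?_
  rintro l ⟨hl, hr⟩
  have hS : ∀ p ∈ l, p ∈ S := fun p hp =>
    ⟨trivial, (hr.2 p hp).2.trans_le (hM (Set.mem_range_self p.1))⟩
  lift l to List S using hS
  exact ⟨l, by simpa using hl, rfl⟩

instance [Finite ι] : Finite (truncatedWords s g) := (finite_truncatedWords s g).to_subtype

variable [DecidableEq ι]

def grow (i : ι) (l : List (ι × ℕ)) : List (ι × ℕ) :=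
  if l.length < g then (i, 1) :: l else l

/-- Left multiplication by `σᵢ` on normal forms, except that a word of length `g` is fixed
instead of being extended; this truncation keeps the set of words finite. -/
def step (i : ι) : List (ι × ℕ) → List (ι × ℕ)
  | (j, m) :: u => if j = i then (if m + 1 < s i then (i, m + 1) :: u else u)
      else grow g i ((j, m) :: u)
  | [] => grow g i []

variable {s g}

lemma step_of_headNe {i : ι} {l : List (ι × ℕ)} (hd : HeadNe i l) :
    step s g i l = grow g i l := by
  match l, hd with
  | [], _ => rfl
  | (j, m) :: u, hd => simp [step, Ne.symm (hd (j, m) rfl)]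

@[simp]
lemma step_cons_self (i : ι) (m : ℕ) (u : List (ι × ℕ)) :
    step s g i ((i, m) :: u) = if m + 1 < s i then (i, m + 1) :: u else u := by
  simp [step]

lemma iterate_step_of_headNe {i : ι} {l : List (ι × ℕ)} (hd : HeadNe i l)
    (hl : l.length < g) {m : ℕ} (hm0 : 0 < m) (hm : m < s i) :
    (step s g i)^[m] l = (i, m) :: l := by
  induction m, hm0 using Nat.le_induction with
  | base => simp [step_of_headNe hd, grow, hl]
  | succ n hn ih => rw [Function.iterate_succ_apply', ih (by omega), step_cons_self, if_pos hm]

lemma iterate_step_self_of_headNe {i : ι} {l : List (ι × ℕ)} (hd : HeadNe i l)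
    (hl : l.length ≤ g) (hi : 2 ≤ s i) : (step s g i)^[s i] l = l := by
  rcases hl.lt_or_eq with hl | hl
  · obtain ⟨n, hn⟩ : ∃ n, s i = n + 1 := ⟨s i - 1, by omega⟩
    rw [hn, Function.iterate_succ_apply', iterate_step_of_headNe hd hl (by omega) (by omega),
      step_cons_self, if_neg (by omega)]
  · exact Function.iterate_fixed (by rw [step_of_headNe hd, grow, if_neg (by omega)]) _

lemma IsReducedWord.iterate_step {i : ι} {l : List (ι × ℕ)} (hr : IsReducedWord s l)
    (hl : l.length ≤ g) (hi : 2 ≤ s i) : (step s g i)^[s i] l = l := by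
  by_cases hd : HeadNe i l
  · exact iterate_step_self_of_headNe hd hl hi
  obtain ⟨m, u, rfl⟩ := exists_eq_cons_of_not_headNe hd
  obtain ⟨hdu, hm0, hm, -⟩ := (isReducedWord_cons s).mp hr
  have hu : u.length < g := by simpa using hl
  rw [← iterate_step_of_headNe hdu hu hm0 hm, ← Function.iterate_add_apply, add_comm,
    Function.iterate_add_apply, iterate_step_self_of_headNe hdu hu.le hi]

lemma mapsTo_step {i : ι} (hi : 1 < s i) :
    Set.MapsTo (step s g i) (truncatedWords s g) (truncatedWords s g) := by
  rintro l ⟨hl, hr⟩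
  by_cases hd : HeadNe i l
  · rw [step_of_headNe hd, grow]
    split_ifs with hlt
    · exact ⟨hlt, (isReducedWord_cons s).mpr ⟨hd, one_pos, hi, hr⟩⟩
    · exact ⟨hl, hr⟩
  obtain ⟨m, u, rfl⟩ := exists_eq_cons_of_not_headNe hd
  obtain ⟨hdu, -, -, hru⟩ := (isReducedWord_cons s).mp hr
  have hu : u.length ≤ g := Nat.le_of_succ_le (by simpa using hl)
  rw [step_cons_self]
  split_ifs with hm
  · exact ⟨by simpa using hl, (isReducedWord_cons s).mpr ⟨hdu, by omega, hm, hru⟩⟩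
  · exact ⟨hu, hru⟩


variable (s g) in
def gen (hs : ∀ i, 2 ≤ s i) (i : ι) : Equiv.Perm (truncatedWords s g) :=
  permOfIterateSuccEqSelf ((mapsTo_step (hs i)).restrict _ _ _) (s i - 1) fun l => by
    rw [Set.MapsTo.iterate_restrict]
    apply Subtype.ext
    rw [Set.MapsTo.val_restrict_apply, Nat.sub_add_cancel (by have := hs i; omega)]
    exact l.2.2.iterate_step l.2.1 (hs i)

variable {hs : ∀ i, 2 ≤ s i}

lemma coe_gen_pow_apply (i : ι) (n : ℕ) (l : truncatedWords s g) :
    ((gen s g hs i ^ n) l : List (ι × ℕ)) = (step s g i)^[n] l := by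
  rw [Equiv.Perm.coe_pow]
  exact (mapsTo_step (hs i)).coe_iterate_restrict l n

lemma orderOf_gen (hg : 0 < g) (i : ι) : orderOf (gen s g hs i) = s i := by
  have hi := hs i
  refine (orderOf_eq_iff (by omega)).mpr ⟨?_, fun m hm hm0 h => ?_⟩
  · ext l : 2
    rw [coe_gen_pow_apply]
    exact l.2.2.iterate_step l.2.1 hi
  · have := coe_gen_pow_apply (hs := hs) i m ⟨[], nil_mem_truncatedWords s g⟩
    rw [h, iterate_step_of_headNe (by simp [HeadNe]) hg hm0 hm] at this
    simp at this

lemma list_prod_gen_apply_nil {L : List (ι × ℕ)} (hL : L ∈ truncatedWords s g) :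
    (L.map fun p => gen s g hs p.1 ^ p.2).prod ⟨[], nil_mem_truncatedWords s g⟩ = ⟨L, hL⟩ := by
  induction L with
  | nil => rfl
  | cons p u ih =>
    obtain ⟨hd, hm0, hm, hu⟩ := (isReducedWord_cons s).mp hL.2
    have hlen : u.length < g := by simpa using hL.1
    rw [List.map_cons, List.prod_cons, Equiv.Perm.mul_apply, ih ⟨hlen.le, hu⟩]
    ext : 1
    rw [coe_gen_pow_apply, iterate_step_of_headNe hd hlen hm0 hm]

lemma list_prod_gen_ne_one {L : List (ι × ℕ)} (hL : L ∈ truncatedWords s g) (hne : L ≠ []) :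
    (L.map fun p => gen s g hs p.1 ^ p.2).prod ≠ 1 := by
  intro h
  have := list_prod_gen_apply_nil (hs := hs) hL
  rw [h] at this
  exact hne (congrArg Subtype.val this).symm

end CyclicFreeProduct

open CyclicFreeProduct

section CosetHypergraph

variable {G ι : Type*} [Group G] (σ : ι → G)

abbrev CosetIndex : Type _ := (i : ι) × (G ⧸ Subgroup.zpowers (σ i))

variable [Finite G]

noncomputable def cosetEdge (t : CosetIndex σ) : Finset G :=
  (Set.toFinite (((↑) : G → G ⧸ Subgroup.zpowers (σ t.1)) ⁻¹' {t.2})).toFinset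

variable {σ}

lemma mem_cosetEdge {t : CosetIndex σ} {v : G} :
    v ∈ cosetEdge σ t ↔ (v : G ⧸ Subgroup.zpowers (σ t.1)) = t.2 := by
  simp [cosetEdge]

lemma card_cosetEdge (t : CosetIndex σ) : (cosetEdge σ t).card = orderOf (σ t.1) := by
  rw [cosetEdge, ← Nat.card_eq_card_finite_toFinset, QuotientGroup.card_preimage_mk,
    Nat.card_zpowers, Nat.card_unique, mul_one]

variable (σ) in
def cosetIncidence (v : G) : ι ≃ {t : CosetIndex σ // v ∈ cosetEdge σ t} where
  toFun i := ⟨⟨i, v⟩, mem_cosetEdge.mpr rfl⟩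
  invFun t := t.1.1
  left_inv _ := rfl
  right_inv := by
    rintro ⟨⟨i, q⟩, hv⟩
    exact Subtype.ext (Sigma.ext rfl (heq_of_eq (mem_cosetEdge.mp hv)))

lemma eq_of_mem_cosetEdge {t t' : CosetIndex σ} {v : G} (h : t.1 = t'.1)
    (hv : v ∈ cosetEdge σ t) (hv' : v ∈ cosetEdge σ t') : t = t' := by
  obtain ⟨i, q⟩ := t
  obtain ⟨i', q'⟩ := t'
  obtain rfl : i = i' := h
  exact Sigma.ext rfl (heq_of_eq ((mem_cosetEdge.mp hv).symm.trans (mem_cosetEdge.mp hv')))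

lemma inv_mul_mem_zpowers_of_mem_cosetEdge {t : CosetIndex σ} {u w : G}
    (hu : u ∈ cosetEdge σ t) (hw : w ∈ cosetEdge σ t) : u⁻¹ * w ∈ Subgroup.zpowers (σ t.1) :=
  QuotientGroup.eq.mp ((mem_cosetEdge.mp hu).trans (mem_cosetEdge.mp hw).symm)

open Fin.NatCast in
/-- Along a Berge cycle consecutive edges have different colours (they share a vertex and are
distinct), so the steps `x j⁻¹ * x (j + 1) ∈ ⟨σ (t j).1⟩` spell a reduced word equal to `1`. -/
theorem exists_reducedWord_prod_eq_one_of_bergeCycle {k : ℕ} (hk : 2 ≤ k)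
    {x : Fin k → G} {t : Fin k → CosetIndex σ} (hx : Function.Injective x)
    (ht : Function.Injective t)
    (hcyc : ∀ j, x j ∈ cosetEdge σ (t j) ∧ x (finRotate k j) ∈ cosetEdge σ (t j)) :
    ∃ L : List (ι × ℕ), L.length = k ∧ IsReducedWord (fun i => orderOf (σ i)) L ∧
      (L.map fun p => σ p.1 ^ p.2).prod = 1 := by
  classical
  obtain ⟨n, rfl⟩ : ∃ n, k = n + 1 := ⟨k - 1, by omega⟩
  have hrot (j : Fin (n + 1)) : finRotate (n + 1) j ≠ j := by
    rw [← Equiv.Perm.mem_support, support_finRotate_of_le hk]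
    exact Finset.mem_univ j
  have hcolor (j : Fin (n + 1)) : (t j).1 ≠ (t (finRotate _ j)).1 := fun h =>
    hrot j (ht (eq_of_mem_cosetEdge h (hcyc j).2 (hcyc _).1)).symm
  have hstep (j : Fin (n + 1)) : ∃ e, 0 < e ∧ e < orderOf (σ (t j).1) ∧
      x (finRotate _ j) = x j * σ (t j).1 ^ e := by
    obtain ⟨e, he, hxe⟩ := Finset.mem_image.mp (mem_zpowers_iff_mem_range_orderOf.mp
      (inv_mul_mem_zpowers_of_mem_cosetEdge (hcyc j).1 (hcyc j).2))
    refine ⟨e, Nat.pos_of_ne_zero ?_, Finset.mem_range.mp he, by rw [hxe, mul_inv_cancel_left]⟩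
    rintro rfl
    exact hrot j (hx (inv_mul_eq_one.mp (by simpa using hxe.symm)).symm)
  choose e he0 he hxe using hstep
  have hprod (m : ℕ) :
      x 0 * ((List.range m).map fun a : ℕ => σ (t a).1 ^ e a).prod = x m := by
    induction m with
    | zero => simp
    | succ m ih =>
      rw [List.range_succ, List.map_append, List.prod_append, ← mul_assoc, ih, Nat.cast_succ,
        ← finRotate_apply, hxe]
      simp
  refine ⟨(List.range (n + 1)).map fun a : ℕ => ((t a).1, e a), by simp, ⟨?_, ?_⟩, ?_⟩
  · rw [List.isChain_map, List.isChain_range]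
    intro m _
    simpa [Nat.cast_succ, finRotate_apply] using hcolor m
  · simpa using fun a _ => ⟨he0 a, he a⟩
  · simpa [List.map_map, Function.comp_def] using hprod (n + 1)

end CosetHypergraph

theorem exists_regular_hypergraph_of_large_girth_general
    (g r : ℕ) (hg : 1 ≤ g) (s : Fin r → ℕ) (hs : ∀ i, 2 ≤ s i) :
    ∃ (V T : Type) (E : T → Finset V), Finite V ∧ Nonempty V ∧ Finite T ∧
      (∀ v : V, ∃ e : Fin r ≃ {t : T // v ∈ E t}, ∀ i : Fin r, (E (e i).1).card = s i) ∧
      ¬∃ (k : ℕ), 2 ≤ k ∧ k < g ∧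
        ∃ (x : Fin k → V) (t : Fin k → T), Function.Injective x ∧ Function.Injective t ∧
          ∀ j : Fin k, x j ∈ E (t j) ∧ x (finRotate k j) ∈ E (t j) := by
  have horder : (fun i => orderOf (gen s g hs i)) = s := funext (orderOf_gen hg)
  refine ⟨Equiv.Perm (truncatedWords s g), CosetIndex (gen s g hs), cosetEdge (gen s g hs),
    inferInstance, ⟨1⟩, inferInstance, fun v => ⟨cosetIncidence _ v, fun i => ?_⟩, ?_⟩
  · rw [card_cosetEdge, orderOf_gen hg]
    rfl
  · rintro ⟨k, hk, hkg, x, t, hx, ht, hcyc⟩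
    obtain ⟨L, hlen, hred, hprod⟩ := exists_reducedWord_prod_eq_one_of_bergeCycle hk hx ht hcyc
    rw [horder] at hred
    have hL : L ∈ truncatedWords s g := ⟨by omega, hred⟩
    exact list_prod_gen_ne_one hL (by rintro rfl; simp at hlen; omega) hprod

/-- For any positive integers `g`, `r` and any prescribed sizes `s₁, …, s_r ≥ 2`, there is a
finite hypergraph (a nonempty finite vertex set `V` with a finite indexed family of hyperedges
`E : T → Finset V`) such that every vertex lies in exactly `r` hyperedges whose multiset of
sizes is `{s₁, …, s_r}`, and there is no Berge cycle of length `k` with `2 ≤ k < g`. -/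
theorem exists_regular_hypergraph_of_large_girth
    (g r : ℕ) (hg : 1 ≤ g) (hr : 1 ≤ r) (s : Fin r → ℕ) (hs : ∀ i, 2 ≤ s i) :
    ∃ (V T : Type) (E : T → Finset V), Finite V ∧ Nonempty V ∧ Finite T ∧
      (∀ v : V, ∃ e : Fin r ≃ {t : T // v ∈ E t}, ∀ i : Fin r, (E (e i).1).card = s i) ∧
      ¬∃ (k : ℕ), 2 ≤ k ∧ k < g ∧
        ∃ (x : Fin k → V) (t : Fin k → T), Function.Injective x ∧ Function.Injective t ∧
          ∀ j : Fin k, x j ∈ E (t j) ∧ x (finRotate k j) ∈ E (t j) :=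
  exists_regular_hypergraph_of_large_girth_general g r hg s hs
end

section
/- Let r ≥ 1 be an integer and let d₁, …, d_r be integers with 0 ≤ d_i ≤ r−1 for every i. For j = 1, …, r−1 set e_j = #{ i : d_i < r − j }. Then (1/2)·∑_{i=1}^{r} d_i + ∑_{i=1}^{r} C(d_i, 2) + ∑_{j=1}^{r−1} C(e_j, 2) ≤ (r−1)·C(r, 2). -/
/-- Let `0 ≤ d₁, …, d_r ≤ r−1` be integers and for `j = 1, …, r−1` let
`e_j = #{i : d_i < r − j}`. Then
`(1/2)·∑ d_i + ∑ C(d_i, 2) + ∑ C(e_j, 2) ≤ (r−1)·C(r,2)`. -/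
theorem degree_sequence_inequality (r : ℕ) (hr : 1 ≤ r) (d : Fin r → ℕ)
    (hd : ∀ i, d i ≤ r - 1) :
    (1 / 2 : ℝ) * ∑ i, (d i : ℝ) + ∑ i, ((d i).choose 2 : ℝ) +
        ∑ j ∈ Finset.Icc 1 (r - 1), ((Nat.card {i : Fin r // d i < r - j}).choose 2 : ℝ)
      ≤ ((r : ℝ) - 1) * (r.choose 2 : ℝ) := by
  classical
  set e : ℕ → ℕ := fun j => Nat.card {i : Fin r // d i < r - j} with he
  have hcard : ∀ j, e j = (Finset.univ.filter (fun i : Fin r => d i < r - j)).card := by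
    intro j
    simp [he, Nat.card_eq_fintype_card, Fintype.card_subtype]
  -- 2 * C(n,2) = n * (n-1)
  have htwo : ∀ n : ℕ, 2 * n.choose 2 = n * (n - 1) := by
    intro n
    cases n with
    | zero => rfl
    | succ m =>
      rw [Nat.choose_two_right, Nat.succ_sub_one,
        Nat.mul_div_cancel' (even_iff_two_dvd.mp (by rw [Nat.mul_comm]; exact Nat.even_mul_succ_self m))]
  -- n + n*(n-1) = n*n
  have hsq : ∀ n : ℕ, n + n * (n - 1) = n * n := by
    intro n
    cases n with
    | zero => rfl
    | succ m => rw [Nat.succ_sub_one]; ring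
  -- sum of e over Icc 1 (r-1)
  have hesum : ∑ j ∈ Finset.Icc 1 (r - 1), e j = ∑ i : Fin r, (r - 1 - d i) := by
    simp only [hcard, Finset.card_filter]
    rw [Finset.sum_comm]
    refine Finset.sum_congr rfl fun i _ => ?_
    rw [← Finset.card_filter]
    have : Finset.filter (fun j => d i < r - j) (Finset.Icc 1 (r - 1))
        = Finset.Icc 1 (r - 1 - d i) := by
      ext j
      simp only [Finset.mem_filter, Finset.mem_Icc]
      have := hd i
      omega
    rw [this, Nat.card_Icc]; omega
  have heb : ∀ j, e j ≤ r := by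
    intro j
    rw [hcard]
    simpa using (Finset.card_filter_le Finset.univ (fun i : Fin r => d i < r - j))
  -- the key Nat inequality
  have key : (∑ i, d i) + 2 * (∑ i, (d i).choose 2)
      + 2 * (∑ j ∈ Finset.Icc 1 (r - 1), (e j).choose 2)
      ≤ 2 * ((r - 1) * r.choose 2) := by
    have h1 : (∑ i, d i) + 2 * (∑ i, (d i).choose 2) ≤ ∑ i, d i * (r - 1) := by
      rw [Finset.mul_sum, ← Finset.sum_add_distrib]
      refine Finset.sum_le_sum fun i _ => ?_
      rw [htwo, hsq]
      exact Nat.mul_le_mul_left _ (hd i)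
    have h2 : 2 * (∑ j ∈ Finset.Icc 1 (r - 1), (e j).choose 2)
        ≤ ∑ j ∈ Finset.Icc 1 (r - 1), e j * (r - 1) := by
      rw [Finset.mul_sum]
      refine Finset.sum_le_sum fun j _ => ?_
      rw [htwo]
      exact Nat.mul_le_mul_left _ (by have := heb j; omega)
    calc (∑ i, d i) + 2 * (∑ i, (d i).choose 2)
          + 2 * (∑ j ∈ Finset.Icc 1 (r - 1), (e j).choose 2)
        ≤ ∑ i, d i * (r - 1) + ∑ j ∈ Finset.Icc 1 (r - 1), e j * (r - 1) :=
          Nat.add_le_add h1 h2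
      _ = (∑ i, d i + ∑ j ∈ Finset.Icc 1 (r - 1), e j) * (r - 1) := by
          rw [add_mul, Finset.sum_mul, Finset.sum_mul]
      _ = (∑ i : Fin r, (d i + (r - 1 - d i))) * (r - 1) := by
          rw [hesum, Finset.sum_add_distrib]
      _ = (∑ i : Fin r, (r - 1)) * (r - 1) := by
          refine congrArg (· * (r - 1)) ?_
          exact Finset.sum_congr rfl fun i _ => by have := hd i; omega
      _ = r * (r - 1) * (r - 1) := by simp [Finset.sum_const, Finset.card_univ, Nat.mul_comm]
      _ = 2 * ((r - 1) * r.choose 2) := by rw [← htwo r]; ring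
  -- cast to ℝ
  have hc : ((r : ℝ) - 1) = ((r - 1 : ℕ) : ℝ) := by
    rw [Nat.cast_sub hr, Nat.cast_one]
  rw [hc]
  have hcast : ((∑ i, d i : ℕ) : ℝ) + 2 * ((∑ i, (d i).choose 2 : ℕ) : ℝ)
      + 2 * ((∑ j ∈ Finset.Icc 1 (r - 1), (e j).choose 2 : ℕ) : ℝ)
      ≤ 2 * (((r - 1 : ℕ) : ℝ) * (r.choose 2 : ℝ)) := by
    exact_mod_cast key
  push_cast at hcast
  linarith
end

section
/- Let B be a finite simple bipartite graph with parts X and Y (every edge joins a vertex of X to a vertex of Y). For each integer j ≥ 1 let f_j = #{ x ∈ X : deg(x) ≥ j }. Then ∑_{y∈Y} C(deg(y), 2) ≤ ∑_{j≥1} C(f_j, 2), where the right-hand sum has only finitely many nonzero terms. -/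
/-- Let `A : X → Y → Prop` be a finite simple bipartite graph with parts `X` and `Y`
(`A x y` meaning that `x` and `y` are joined by an edge). With `f_j` the number of `x ∈ X`
of degree at least `j`, we have `∑_{y ∈ Y} C(deg y, 2) ≤ ∑_{j ≥ 1} C(f_j, 2)`
(all terms of the right-hand sum with `j > |Y|` vanish, since degrees in `X` are at most `|Y|`). -/
theorem sum_choose_deg_le_sum_choose_f {X Y : Type*} [Fintype X] [Fintype Y]
    (A : X → Y → Prop) :
    ∑ y : Y, (Nat.card {x : X // A x y}).choose 2 ≤
      ∑ j ∈ Finset.Icc 1 (Fintype.card Y),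
        (Nat.card {x : X // j ≤ Nat.card {y : Y // A x y}}).choose 2 := by
  classical
  have hcX : ∀ (P : X → Prop), Nat.card {x : X // P x}
      = (Finset.univ.filter P).card := by
    intro P
    rw [Nat.card_eq_fintype_card, Fintype.card_subtype]
  have hcY : ∀ (P : Y → Prop), Nat.card {y : Y // P y}
      = (Finset.univ.filter P).card := by
    intro P
    rw [Nat.card_eq_fintype_card, Fintype.card_subtype]
  have key : ∀ (deg : X → ℕ) (D : Y → Finset X),
      (∀ x y, x ∈ D y ↔ A x y) →
      (∀ x, deg x = (Finset.univ.filter fun y => x ∈ D y).card) →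
      ∑ y : Y, (D y).card.choose 2 ≤
        ∑ j ∈ Finset.Icc 1 (Fintype.card Y),
          (Finset.univ.filter fun x => j ≤ deg x).card.choose 2 := by
    intro deg D hDA hdeg
    calc ∑ y : Y, (D y).card.choose 2
        = ∑ y : Y, ((D y).powersetCard 2).card := by
          simp [Finset.card_powersetCard]
      _ = ∑ y : Y, ∑ p ∈ (Finset.univ : Finset X).powersetCard 2,
            if p ⊆ D y then 1 else 0 := by
          refine Finset.sum_congr rfl fun y _ => ?_
          rw [← Finset.card_filter]
          congr 1
          ext p
          simp only [Finset.mem_filter, Finset.mem_powersetCard]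
          constructor
          · rintro ⟨hp, hc⟩; exact ⟨⟨Finset.subset_univ p, hc⟩, hp⟩
          · rintro ⟨⟨_, hc⟩, hp⟩; exact ⟨hp, hc⟩
      _ = ∑ p ∈ (Finset.univ : Finset X).powersetCard 2, ∑ y : Y,
            if p ⊆ D y then 1 else 0 := Finset.sum_comm
      _ ≤ ∑ p ∈ (Finset.univ : Finset X).powersetCard 2,
            ∑ j ∈ Finset.Icc 1 (Fintype.card Y),
              if p ⊆ Finset.univ.filter (fun x => j ≤ deg x) then 1 else 0 := by
          refine Finset.sum_le_sum fun p hp => ?_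
          set c : ℕ := (Finset.univ.filter fun y => p ⊆ D y).card with hc
          have h1 : (∑ y : Y, if p ⊆ D y then 1 else 0) = c := by
            rw [hc, Finset.card_filter]
          have hcY' : c ≤ Fintype.card Y := by
            rw [hc]
            simpa using Finset.card_filter_le Finset.univ _
          have hcdeg : ∀ x ∈ p, c ≤ deg x := by
            intro x hx
            rw [hdeg x]
            refine Finset.card_le_card ?_
            intro y hy
            simp only [Finset.mem_filter] at hy ⊢
            exact ⟨Finset.mem_univ y, hy.2 hx⟩
          have h2 : c ≤ ∑ j ∈ Finset.Icc 1 (Fintype.card Y),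
              if p ⊆ Finset.univ.filter (fun x => j ≤ deg x) then 1 else 0 := by
            calc c = ∑ j ∈ Finset.Icc 1 c, 1 := by simp
              _ = ∑ j ∈ Finset.Icc 1 c,
                    if p ⊆ Finset.univ.filter (fun x => j ≤ deg x) then 1 else 0 := by
                  refine Finset.sum_congr rfl fun j hj => ?_
                  rw [Finset.mem_Icc] at hj
                  have hsub : p ⊆ Finset.univ.filter (fun x => j ≤ deg x) := by
                    intro x hx
                    simp only [Finset.mem_filter]
                    exact ⟨Finset.mem_univ x, hj.2.trans (hcdeg x hx)⟩
                  simp [hsub]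
              _ ≤ ∑ j ∈ Finset.Icc 1 (Fintype.card Y),
                    if p ⊆ Finset.univ.filter (fun x => j ≤ deg x) then 1 else 0 :=
                  Finset.sum_le_sum_of_subset (Finset.Icc_subset_Icc_right hcY')
          rw [h1]; exact h2
      _ = ∑ j ∈ Finset.Icc 1 (Fintype.card Y),
            ∑ p ∈ (Finset.univ : Finset X).powersetCard 2,
              if p ⊆ Finset.univ.filter (fun x => j ≤ deg x) then 1 else 0 :=
          Finset.sum_comm
      _ = ∑ j ∈ Finset.Icc 1 (Fintype.card Y),
            (Finset.univ.filter fun x => j ≤ deg x).card.choose 2 := by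
          refine Finset.sum_congr rfl fun j _ => ?_
          rw [← Finset.card_filter, ← Finset.card_powersetCard]
          congr 1
          ext p
          simp only [Finset.mem_filter, Finset.mem_powersetCard]
          constructor
          · rintro ⟨⟨_, hc⟩, hp⟩; exact ⟨hp, hc⟩
          · rintro ⟨hp, hc⟩; exact ⟨⟨Finset.subset_univ p, hc⟩, hp⟩
  have := key (fun x => Nat.card {y : Y // A x y})
      (fun y => Finset.univ.filter fun x => A x y)
      (by intro x y; simp) ?_
  · simp only [hcX, hcY] at this ⊢
    convert this using 3; congr!
  · intro x
    show Nat.card {y : Y // A x y} = _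
    rw [hcY]
    congr 1
    ext y
    simp
end

section
/- For every integer r ≥ 3 there exists a nonempty finite simple r-regular graph that contains no 3-cycles and no 4-cycles (i.e., it has girth at least 5). -/
open SimpleGraph

/-!
Take a Sidon set `S` of size `r` in a finite abelian group `A`, and join `(false, x)` to
`(true, y)` whenever `x + y ∈ S`. This bipartite graph is `r`-regular and has no odd cycles.
A `4`-cycle `x, a, b, c` would give `(x + a) + (b + c) = (a + b) + (c + x)` with all four sums
in `S`, so the Sidon property forces `x = b` or `a = c`. The powers `3 ^ i`, `i < r`, form a
Sidon set in `ZMod (3 ^ r)`: all pairwise sums are below `3 ^ r`, and a sum of two powers of `3`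
determines the two exponents by its `3`-adic valuation.
-/

lemma cycleCount_eq_zero {V : Type*} {G : SimpleGraph V} {k : ℕ}
    (h : ∀ (x : V) (p : G.Walk x x), p.IsCycle → p.length ≠ k) : cycleCount G k = 0 := by
  have : IsEmpty ((x : V) × {p : G.Walk x x // p.IsCycle ∧ p.length = k}) :=
    ⟨fun ⟨x, p, hp, hk⟩ => h x p hp hk⟩
  rw [cycleCount, Nat.card_of_isEmpty, Nat.zero_div]

def IsSidon {A : Type*} [Add A] (S : Set A) : Prop :=
  ∀ ⦃a⦄, a ∈ S → ∀ ⦃b⦄, b ∈ S → ∀ ⦃c⦄, c ∈ S → ∀ ⦃d⦄, d ∈ S →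
    a + b = c + d → a = c ∧ b = d ∨ a = d ∧ b = c

section PowSidon

variable {q : ℕ}

lemma not_pow_succ_dvd_pow_add_pow (hq : 2 < q) {a b : ℕ} (hab : a ≤ b) :
    ¬ q ^ (a + 1) ∣ q ^ a + q ^ b := by
  obtain ⟨k, rfl⟩ := Nat.exists_eq_add_of_le hab
  rw [pow_succ, pow_add q a k, ← mul_one_add, Nat.mul_dvd_mul_iff_left (by positivity)]
  rcases k with _ | k
  · exact Nat.not_dvd_of_pos_of_lt two_pos hq
  · rw [Nat.dvd_add_left (dvd_pow_self q k.succ_ne_zero), Nat.dvd_one]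
    omega

lemma le_of_pow_add_pow_eq (hq : 2 < q) {a b c d : ℕ} (hab : a ≤ b) (hcd : c ≤ d)
    (h : q ^ a + q ^ b = q ^ c + q ^ d) : a ≤ c := by
  by_contra! hca
  apply not_pow_succ_dvd_pow_add_pow hq hcd
  rw [← h]
  exact dvd_add (pow_dvd_pow q hca) (pow_dvd_pow q (by omega))

lemma pow_add_pow_eq_pow_add_pow (hq : 2 < q) {a b c d : ℕ}
    (h : q ^ a + q ^ b = q ^ c + q ^ d) : a = c ∧ b = d ∨ a = d ∧ b = c := by
  wlog hab : a ≤ b generalizing a b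
  · have := this (b := a) (a := b) ((add_comm _ _).trans h) (by omega)
    tauto
  wlog hcd : c ≤ d generalizing c d
  · have := this (d := c) (c := d) (h.trans (add_comm _ _)) (by omega)
    tauto
  have hac : a = c :=
    (le_of_pow_add_pow_eq hq hab hcd h).antisymm (le_of_pow_add_pow_eq hq hcd hab h.symm)
  subst hac
  exact .inl ⟨rfl, Nat.pow_right_injective hq.le (Nat.add_left_cancel h)⟩

lemma two_mul_pow_lt_pow (hq : 2 < q) {i r : ℕ} (hi : i < r) : 2 * q ^ i < q ^ r :=
  calc 2 * q ^ i < q * q ^ i := by gcongr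
    _ = q ^ (i + 1) := by ring
    _ ≤ q ^ r := Nat.pow_le_pow_right (by omega) hi

def powResidues (q r : ℕ) : Set (ZMod (q ^ r)) :=
  Set.range fun i : Fin r => ((q ^ (i : ℕ) : ℕ) : ZMod (q ^ r))

lemma isSidon_powResidues (hq : 2 < q) (r : ℕ) : IsSidon (powResidues q r) := by
  rintro _ ⟨i, rfl⟩ _ ⟨j, rfl⟩ _ ⟨k, rfl⟩ _ ⟨l, rfl⟩ h
  have hi := two_mul_pow_lt_pow hq i.2
  have hj := two_mul_pow_lt_pow hq j.2
  have hk := two_mul_pow_lt_pow hq k.2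
  have hl := two_mul_pow_lt_pow hq l.2
  simp only [← Nat.cast_add] at h
  have := congrArg ZMod.val h
  rw [ZMod.val_natCast_of_lt (by omega), ZMod.val_natCast_of_lt (by omega)] at this
  rcases pow_add_pow_eq_pow_add_pow hq this with ⟨hik, hjl⟩ | ⟨hil, hjk⟩
  · rw [Fin.ext hik, Fin.ext hjl]; simp
  · rw [Fin.ext hil, Fin.ext hjk]; simp

lemma card_powResidues (hq : 2 < q) (r : ℕ) : Nat.card (powResidues q r) = r := by
  rw [powResidues, Nat.card_range_of_injective, Nat.card_eq_fintype_card, Fintype.card_fin]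
  intro i j h
  have hi := two_mul_pow_lt_pow hq i.2
  have hj := two_mul_pow_lt_pow hq j.2
  have := congrArg ZMod.val h
  simp only at this
  rw [ZMod.val_natCast_of_lt (by omega), ZMod.val_natCast_of_lt (by omega)] at this
  exact Fin.ext (Nat.pow_right_injective hq.le this)

end PowSidon

section BipartiteSumGraph

variable {A : Type*} [AddCommGroup A] (S : Set A)

def bipartiteSumGraph : SimpleGraph (Bool × A) where
  Adj u v := u.1 ≠ v.1 ∧ u.2 + v.2 ∈ S
  symm := ⟨fun u v h => ⟨h.1.symm, add_comm u.2 v.2 ▸ h.2⟩⟩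
  loopless := ⟨fun _ h => h.1 rfl⟩

variable {S}

@[simp]
lemma bipartiteSumGraph_adj {u v : Bool × A} :
    (bipartiteSumGraph S).Adj u v ↔ u.1 ≠ v.1 ∧ u.2 + v.2 ∈ S := Iff.rfl

lemma card_neighborSet_bipartiteSumGraph (v : Bool × A) :
    Nat.card ((bipartiteSumGraph S).neighborSet v) = Nat.card S :=
  Nat.card_congr
    { toFun w := ⟨v.2 + w.1.2, w.2.2⟩
      invFun s := ⟨(!v.1, s - v.2), by simp⟩
      left_inv := by
        rintro ⟨w, hne, -⟩
        ext
        · exact (Bool.eq_not.mpr hne.symm).symm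
        · simp
      right_inv s := by simp }

lemma even_length_of_bipartiteSumGraph {u : Bool × A} (p : (bipartiteSumGraph S).Walk u u) :
    Even p.length :=
  (Coloring.mk (G := bipartiteSumGraph S) Prod.fst fun h => h.1).even_length_iff_congr p
    |>.mpr Iff.rfl

lemma fst_eq_of_adj_of_adj {x a b : Bool × A} (hxa : (bipartiteSumGraph S).Adj x a)
    (hab : (bipartiteSumGraph S).Adj a b) : x.1 = b.1 :=
  (Bool.eq_not.mpr hxa.1).trans (Bool.eq_not.mpr hab.1.symm).symm

lemma eq_or_eq_of_bipartiteSumGraph_square (hS : IsSidon S) {x a b c : Bool × A}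
    (hxa : (bipartiteSumGraph S).Adj x a) (hab : (bipartiteSumGraph S).Adj a b)
    (hbc : (bipartiteSumGraph S).Adj b c) (hcx : (bipartiteSumGraph S).Adj c x) :
    x = b ∨ a = c := by
  have hsum : (x.2 + a.2) + (b.2 + c.2) = (a.2 + b.2) + (c.2 + x.2) := by abel
  rcases hS hxa.2 hbc.2 hab.2 hcx.2 hsum with ⟨h, -⟩ | ⟨h, -⟩
  · left
    ext
    · exact fst_eq_of_adj_of_adj hxa hab
    · simpa [add_comm a.2] using h
  · right
    ext
    · exact fst_eq_of_adj_of_adj hab hbc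
    · simpa [add_comm c.2] using h

lemma length_ne_four_of_bipartiteSumGraph (hS : IsSidon S) {x : Bool × A}
    {p : (bipartiteSumGraph S).Walk x x} (hp : p.IsCycle) : p.length ≠ 4 := by
  intro hlen
  have hadj (i : ℕ) (hi : i < 4) := p.adj_getVert_succ (hlen ▸ hi)
  have hclose : p.getVert 4 = p.getVert 0 := by rw [← hlen, p.getVert_length, p.getVert_zero]
  have hcx := hadj 3 (by norm_num)
  rw [hclose] at hcx
  rcases eq_or_eq_of_bipartiteSumGraph_square hS (hadj 0 (by norm_num))
    (hadj 1 (by norm_num)) (hadj 2 (by norm_num)) hcx with h | h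
  · exact hp.getVert_sub_one_ne_getVert_add_one (i := 1) (by omega) h
  · exact hp.getVert_sub_one_ne_getVert_add_one (i := 2) (by omega) h

end BipartiteSumGraph

theorem exists_regular_graph_girth_ge_five_general (r : ℕ) :
    ∃ (V : Type) (G : SimpleGraph V), Finite V ∧ Nonempty V ∧ IsRegularGraph G r ∧
      cycleCount G 3 = 0 ∧ cycleCount G 4 = 0 := by
  have hq : 2 < 3 := by norm_num
  refine ⟨Bool × ZMod (3 ^ r), bipartiteSumGraph (powResidues 3 r), inferInstance,
    inferInstance, fun v => ?_, cycleCount_eq_zero fun x p _ h3 => ?_,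
    cycleCount_eq_zero fun x p hp => length_ne_four_of_bipartiteSumGraph
      (isSidon_powResidues hq r) hp⟩
  · rw [card_neighborSet_bipartiteSumGraph, card_powResidues hq]
  · exact absurd (h3 ▸ even_length_of_bipartiteSumGraph p) (by decide)

/-- For every `r ≥ 3` there is a nonempty finite simple `r`-regular graph with no `3`-cycles
and no `4`-cycles (i.e. of girth at least 5). -/
theorem exists_regular_graph_girth_ge_five (r : ℕ) (hr : 3 ≤ r) :
    ∃ (V : Type) (G : SimpleGraph V), Finite V ∧ Nonempty V ∧ IsRegularGraph G r ∧
      cycleCount G 3 = 0 ∧ cycleCount G 4 = 0 :=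
  exists_regular_graph_girth_ge_five_general r
end
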